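/- arXiv:2102.11899 — 9 statements merged into one kernel-verified Lean document; each statement's English description precedes it below -/
import Mathlib

section
/- Let Q be a transfer operator, let d ≥ 2 and q ≥ 2 be integers, and regard S_q as a map on the open set of vectors in ℝ^q with strictly positive entries. Then the Fréchet derivative D S_q[eq] of S_q at the barycenter eq maps the hyperplane T = {v ∈ ℝ^q : ∑_i v_i = 0} into itself, and the set of eigenvalues of the restriction of D S_q[eq] to T equals { d·Q̂(2πj/q)/Q̂(0) : j = 1, …, ⌊q/2⌋ }. -/
open scoped BigOperators

/-- Fourier transform of a transfer operator `Q : ℤ → ℝ`. -/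
noncomputable def fourierTransform (Q : ℤ → ℝ) (k : ℝ) : ℝ :=
  ∑' n : ℤ, Q n * Real.cos (n * k)

/-- The mod-`q` fuzzy transfer operator, a `q × q` circulant matrix. -/
noncomputable def fuzzyOp (Q : ℤ → ℝ) (q : ℕ) : Matrix (Fin q) (Fin q) ℝ :=
  fun r s => ∑' m : ℤ, Q ((r : ℤ) - (s : ℤ) + q * m)

/-- The map `S_q(u) = Q^q u^{⊙d} / (Q̂(0) · ‖u^{⊙d}‖₁)`. -/
noncomputable def Smap (Q : ℤ → ℝ) (q d : ℕ) (u : Fin q → ℝ) : Fin q → ℝ :=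
  fun i => (fuzzyOp Q q).mulVec (fun j => u j ^ d) i /
    (fourierTransform Q 0 * ∑ j, |u j ^ d|)

/-- The barycenter `eq = (1/q, …, 1/q)` of the unit simplex. -/
noncomputable def barycenter (q : ℕ) : Fin q → ℝ := fun _ => 1 / (q : ℝ)

/-!
Near the barycenter all coordinates are positive, so `S_q` is the smooth map
`u ↦ Q^q u^{⊙d} / (Q̂(0) ∑ u_j^d)`; its derivative at `e_q` is
`v ↦ (d / Q̂(0)) Q^q v - (d / q) (∑ v) 𝟙`, which on the hyperplane `T` is just
`(d / Q̂(0)) Q^q`. As `Q` is even, the circulant `Q^q` is symmetric and every real Fourier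
mode `s ↦ cos (2πjs/q - α)` is an eigenvector with eigenvalue `Q̂(2πj/q)`; for `q ∤ j` the mode
lies in `T`. By Fourier inversion on `ℤ/q`, a nonzero `v ∈ T` pairs nontrivially with some mode
of index `0 < j < q`, and symmetry then pins its eigenvalue to `d Q̂(2πj/q) / Q̂(0)`. Finally
`Q̂(2π - θ) = Q̂(θ)` folds `j` into `1 ≤ j ≤ ⌊q/2⌋`.
-/

open Real Matrix Finset Filter Topology

section FourierTransform

variable {Q : ℤ → ℝ}

lemma fourierTransform_zero (Q : ℤ → ℝ) : fourierTransform Q 0 = ∑' n, Q n := by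
  simp [fourierTransform]

lemma fourierTransform_zero_pos (hpos : ∀ n, 0 < Q n) (hsum : Summable Q) :
    0 < fourierTransform Q 0 := by
  rw [fourierTransform_zero]
  exact hsum.tsum_pos (fun n => (hpos n).le) 0 (hpos 0)

lemma fourierTransform_two_pi_sub (Q : ℤ → ℝ) (θ : ℝ) :
    fourierTransform Q (2 * π - θ) = fourierTransform Q θ := by
  refine tsum_congr fun n => ?_
  rw [mul_sub, cos_int_mul_two_pi_sub]

lemma exists_le_half_fourierTransform_eq (Q : ℤ → ℝ) {q j : ℕ} (hj0 : 0 < j) (hjq : j < q) :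
    ∃ k, 1 ≤ k ∧ k ≤ q / 2 ∧
      fourierTransform Q (2 * π * k / q) = fourierTransform Q (2 * π * j / q) := by
  rcases le_or_gt j (q / 2) with h | h
  · exact ⟨j, hj0, h, rfl⟩
  · have hq : (q : ℝ) ≠ 0 := by norm_cast; omega
    refine ⟨q - j, by omega, by omega, ?_⟩
    rw [← fourierTransform_two_pi_sub]
    congr 1
    push_cast [hjq.le]
    field_simp
    ring

lemma summable_mul_of_abs_le (hsum : Summable Q) {f : ℤ → ℝ} {C : ℝ} (hf : ∀ n, |f n| ≤ C) :
    Summable fun n => Q n * f n :=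
  (hsum.abs.mul_right C).of_norm_bounded fun n => by
    rw [Real.norm_eq_abs, abs_mul]
    exact mul_le_mul_of_nonneg_left (hf n) (abs_nonneg _)

lemma tsum_mul_sin_eq_zero (hsymm : ∀ n, Q (-n) = Q n) (θ : ℝ) :
    ∑' n : ℤ, Q n * sin (n * θ) = 0 := by
  have h := (Equiv.neg ℤ).tsum_eq fun n : ℤ => Q n * sin (n * θ)
  simp only [Equiv.neg_apply, hsymm, Int.cast_neg, neg_mul, sin_neg, mul_neg, tsum_neg] at h
  linarith

lemma tsum_mul_cos_sub (hsymm : ∀ n, Q (-n) = Q n) (hsum : Summable Q) (x θ : ℝ) :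
    ∑' n : ℤ, Q n * cos (x - n * θ) = fourierTransform Q θ * cos x := by
  have hc := summable_mul_of_abs_le hsum fun n : ℤ => abs_cos_le_one (n * θ)
  have hs := summable_mul_of_abs_le hsum fun n : ℤ => abs_sin_le_one (n * θ)
  calc ∑' n : ℤ, Q n * cos (x - n * θ)
      = ∑' n : ℤ, (cos x * (Q n * cos (n * θ)) + sin x * (Q n * sin (n * θ))) := by
        refine tsum_congr fun n => ?_
        rw [cos_sub]
        ring
    _ = cos x * fourierTransform Q θ + sin x * ∑' n : ℤ, Q n * sin (n * θ) := by
        rw [(hc.mul_left _).tsum_add (hs.mul_left _), tsum_mul_left, tsum_mul_left,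
          fourierTransform]
    _ = fourierTransform Q θ * cos x := by
        rw [tsum_mul_sin_eq_zero hsymm]
        ring

end FourierTransform

namespace Matrix.IsSymm

variable {n R : Type*} [Fintype n]

theorem dotProduct_mulVec_comm [CommSemiring R] {A : Matrix n n R} (hA : A.IsSymm)
    (φ v : n → R) : φ ⬝ᵥ (A *ᵥ v) = (A *ᵥ φ) ⬝ᵥ v := by
  rw [dotProduct_mulVec, ← mulVec_transpose, hA.eq]

theorem eq_of_dotProduct_ne_zero [CommRing R] [IsDomain R] {A : Matrix n n R} (hA : A.IsSymm)
    {φ v : n → R} {a b : R} (hφ : A *ᵥ φ = a • φ) (hv : A *ᵥ v = b • v) (h : φ ⬝ᵥ v ≠ 0) :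
    b = a := by
  refine mul_right_cancel₀ h ?_
  calc b * (φ ⬝ᵥ v) = φ ⬝ᵥ (A *ᵥ v) := by rw [hv, dotProduct_smul, smul_eq_mul]
    _ = (A *ᵥ φ) ⬝ᵥ v := hA.dotProduct_mulVec_comm φ v
    _ = a * (φ ⬝ᵥ v) := by rw [hφ, smul_dotProduct, smul_eq_mul]

end Matrix.IsSymm

section CosMode

noncomputable def cosMode (q j : ℕ) (α : ℝ) : Fin q → ℝ := fun s => cos (s * (2 * π * j / q) - α)

lemma sum_range_cos_eq_zero {q : ℕ} {m : ℤ} (hm : ¬ (q : ℤ) ∣ m) (α : ℝ) :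
    ∑ i ∈ range q, cos (i * (2 * π * m / q) - α) = 0 := by
  rcases Nat.eq_zero_or_pos q with rfl | hq
  · simp
  have hq : (q : ℝ) ≠ 0 := by positivity
  have hsin : sin (2 * π * m / q / 2) ≠ 0 := by
    rw [Ne, sin_eq_zero_iff]
    rintro ⟨n, hn⟩
    refine hm ⟨n, ?_⟩
    have : (m : ℝ) = q * n := by
      field_simp at hn
      nlinarith [pi_pos]
    exact_mod_cast this
  have h := sin_mul_sum_cos q (2 * π * m / q) (-α)
  rw [show (q : ℝ) * (2 * π * m / q) / 2 = m * π by field_simp, sin_int_mul_pi, zero_mul] at h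
  simpa [mul_comm, sub_eq_add_neg] using (mul_eq_zero.1 h).resolve_left hsin

lemma sum_cosMode_eq_zero {q j : ℕ} (hj : ¬ q ∣ j) (α : ℝ) : ∑ s, cosMode q j α s = 0 := by
  have := sum_range_cos_eq_zero (q := q) (m := j) (by exact_mod_cast hj) α
  simp only [cosMode]
  rw [Fin.sum_univ_eq_sum_range (fun i => cos (i * (2 * π * j / q) - α))]
  exact_mod_cast this

lemma sum_range_cosMode_dotProduct {q : ℕ} (v : Fin q → ℝ) (s : Fin q) :
    ∑ j ∈ range q, cosMode q j (s * (2 * π * j / q)) ⬝ᵥ v = q * v s := by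
  have horth : ∀ t : Fin q, ∑ j ∈ range q, cos (t * (2 * π * j / q) - s * (2 * π * j / q))
      = if t = s then (q : ℝ) else 0 := by
    intro t
    split_ifs with hts
    · simp [hts]
    have hdvd : ¬ (q : ℤ) ∣ (t : ℤ) - s := fun h => hts <| Fin.ext <| by
      have := Int.eq_zero_of_dvd_of_natAbs_lt_natAbs h (by omega)
      omega
    rw [← sum_range_cos_eq_zero hdvd 0]
    refine sum_congr rfl fun j _ => ?_
    push_cast
    ring_nf
  simp only [dotProduct, cosMode]
  rw [sum_comm]
  simp_rw [← sum_mul, horth]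
  simp

theorem Matrix.IsSymm.exists_cosMode_eigenvalue_eq {q : ℕ} {M : Matrix (Fin q) (Fin q) ℝ}
    (hM : M.IsSymm) {eig : ℕ → ℝ} (hmode : ∀ j α, M *ᵥ cosMode q j α = eig j • cosMode q j α)
    {v : Fin q → ℝ} (hv0 : v ≠ 0) (hv : ∑ i, v i = 0) {μ : ℝ} (hμ : M *ᵥ v = μ • v) :
    ∃ j, 0 < j ∧ j < q ∧ μ = eig j := by
  obtain ⟨s, hs⟩ : ∃ s, v s ≠ 0 := by
    by_contra! h
    exact hv0 (funext h)
  obtain ⟨j, hj, hjv⟩ := exists_ne_zero_of_sum_ne_zero <|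
    (sum_range_cosMode_dotProduct v s).trans_ne (mul_ne_zero (Nat.cast_pos.2 s.pos).ne' hs)
  refine ⟨j, Nat.pos_of_ne_zero ?_, mem_range.1 hj, hM.eq_of_dotProduct_ne_zero (hmode j _) hμ hjv⟩
  rintro rfl
  simp [cosMode, dotProduct, hv] at hjv

end CosMode

section FuzzyOp

variable {Q : ℤ → ℝ} {q : ℕ}

lemma fuzzyOp_isSymm (hsymm : ∀ n, Q (-n) = Q n) (q : ℕ) : (fuzzyOp Q q).IsSymm := by
  refine IsSymm.ext fun r s => ?_
  rw [fuzzyOp, fuzzyOp, ← (Equiv.neg ℤ).tsum_eq]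
  refine tsum_congr fun m => ?_
  rw [Equiv.neg_apply, ← hsymm]
  congr 1
  ring

lemma fuzzyOp_mulVec_apply_of_periodic (hsum : Summable Q) [NeZero q] {f : ℤ → ℝ}
    (hper : ∀ n m : ℤ, f (n + q * m) = f n) {C : ℝ} (hC : ∀ n, |f n| ≤ C) (r : Fin q) :
    (fuzzyOp Q q *ᵥ fun s => f s) r = ∑' n : ℤ, Q n * f (r - n) := by
  obtain ⟨e, he⟩ : ∃ e : Fin q × ℤ ≃ ℤ, ∀ p, e p = r - p.1 + q * p.2 :=
    ⟨((Equiv.prodComm _ _).trans ((Equiv.neg ℤ).prodCongr (Equiv.refl _))).trans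
      ((Int.divModEquiv q).symm.trans (Equiv.subLeft (r : ℤ))), fun ⟨s, m⟩ => by
        simp only [Equiv.trans_apply, Equiv.prodComm_apply, Prod.swap_prod_mk,
          Equiv.prodCongr_apply, Prod.map_apply, Equiv.neg_apply, Equiv.coe_refl, id_eq,
          Int.divModEquiv_symm_apply, Equiv.subLeft, Equiv.coe_fn_mk]
        ring⟩
  have hterm : ∀ p : Fin q × ℤ, Q (r - p.1 + q * p.2) * f p.1 = Q (e p) * f (r - e p) := by
    rintro ⟨s, m⟩
    rw [he, show (r : ℤ) - (r - s + q * m) = s + q * (-m) by ring, hper]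
  have hg : Summable fun n => Q n * f (r - n) := summable_mul_of_abs_le hsum fun n => hC _
  calc (fuzzyOp Q q *ᵥ fun s => f s) r = ∑ s : Fin q, ∑' m : ℤ, Q (r - s + q * m) * f s := by
        simp only [mulVec, dotProduct, fuzzyOp, tsum_mul_right]
    _ = ∑' p : Fin q × ℤ, Q (r - p.1 + q * p.2) * f p.1 := by
        have hprod : Summable fun p : Fin q × ℤ => Q (r - p.1 + q * p.2) * f p.1 :=
          (summable_congr hterm).2 (e.summable_iff.2 hg)
        rw [hprod.tsum_prod, tsum_fintype]
    _ = ∑' n, Q n * f (r - n) := by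
        rw [tsum_congr hterm]
        exact e.tsum_eq fun n => Q n * f (r - n)

lemma fuzzyOp_mulVec_const (hsum : Summable Q) [NeZero q] (a : ℝ) :
    fuzzyOp Q q *ᵥ (fun _ => a) = fun _ => fourierTransform Q 0 * a := by
  ext r
  rw [fuzzyOp_mulVec_apply_of_periodic hsum (f := fun _ => a) (fun _ _ => rfl)
    (fun _ => le_refl |a|), tsum_mul_right, fourierTransform_zero]

lemma sum_fuzzyOp_mulVec (hsymm : ∀ n, Q (-n) = Q n) (hsum : Summable Q) [NeZero q]
    (v : Fin q → ℝ) : ∑ i, (fuzzyOp Q q *ᵥ v) i = fourierTransform Q 0 * ∑ i, v i := by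
  rw [← one_dotProduct, (fuzzyOp_isSymm hsymm q).dotProduct_mulVec_comm, Pi.one_def,
    fuzzyOp_mulVec_const hsum, dotProduct, mul_sum]
  simp only [mul_one]

lemma fuzzyOp_mulVec_cosMode (hsymm : ∀ n, Q (-n) = Q n) (hsum : Summable Q) [NeZero q]
    (j : ℕ) (α : ℝ) :
    fuzzyOp Q q *ᵥ cosMode q j α = fourierTransform Q (2 * π * j / q) • cosMode q j α := by
  have hq : (q : ℝ) ≠ 0 := NeZero.ne _
  have hper : ∀ n m : ℤ, cos (((n + q * m : ℤ) : ℝ) * (2 * π * j / q) - α)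
      = cos (n * (2 * π * j / q) - α) := by
    intro n m
    have : ((n + q * m : ℤ) : ℝ) * (2 * π * j / q) - α
        = n * (2 * π * j / q) - α + (j * m : ℤ) * (2 * π) := by
      push_cast
      field_simp
      ring
    rw [this, cos_add_int_mul_two_pi]
  ext r
  have h := fuzzyOp_mulVec_apply_of_periodic hsum
    (f := fun n : ℤ => cos (n * (2 * π * j / q) - α)) hper (fun _ => abs_cos_le_one _) r
  simp only [Int.cast_natCast] at h
  refine h.trans ?_
  rw [Pi.smul_apply, smul_eq_mul, cosMode, ← tsum_mul_cos_sub hsymm hsum]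
  refine tsum_congr fun n => ?_
  push_cast
  ring_nf

end FuzzyOp

section Derivative

variable {Q : ℤ → ℝ} {q : ℕ}

lemma hasFDerivAt_sum_mul_pow {ι : Type*} [Fintype ι] (a : ι → ℝ) (d : ℕ) (x : ι → ℝ) :
    HasFDerivAt (fun u : ι → ℝ => ∑ s, a s * u s ^ d)
      (∑ s, (a s * (d * x s ^ (d - 1))) • (ContinuousLinearMap.proj s : (ι → ℝ) →L[ℝ] ℝ)) x := by
  refine HasFDerivAt.fun_sum fun s _ => ?_
  have h := ((hasDerivAt_pow d (x s)).comp_hasFDerivAt x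
    (ContinuousLinearMap.proj (R := ℝ) (φ := fun _ : ι => ℝ) s).hasFDerivAt).const_mul (a s)
  rw [smul_smul] at h
  exact h

lemma Smap_apply_of_pos (d : ℕ) {u : Fin q → ℝ} (hu : ∀ s, 0 < u s) (i : Fin q) :
    Smap Q q d u i
      = (∑ s, fuzzyOp Q q i s * u s ^ d) * (∑ s, fourierTransform Q 0 * u s ^ d)⁻¹ := by
  simp only [Smap, mulVec, dotProduct, abs_of_pos (pow_pos (hu _) _), mul_sum, div_eq_mul_inv]

theorem fderiv_Smap_barycenter (hpos : ∀ n, 0 < Q n) (hsum : Summable Q) (d : ℕ) [NeZero q]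
    (v : Fin q → ℝ) :
    fderiv ℝ (Smap Q q d) (barycenter q) v
      = (d / fourierTransform Q 0) • (fuzzyOp Q q *ᵥ v) - fun _ => d / q * ∑ j, v j := by
  set c := fourierTransform Q 0
  set A := fuzzyOp Q q
  set t : ℝ := 1 / q with ht
  have hc : c ≠ 0 := (fourierTransform_zero_pos hpos hsum).ne'
  have hq : (q : ℝ) ≠ 0 := NeZero.ne _
  have ht0 : t ≠ 0 := by positivity
  have htq : t * q = 1 := by rw [ht]; field_simp
  have hD : ∑ _s : Fin q, c * t ^ d ≠ 0 := by
    simp only [sum_const, card_univ, Fintype.card_fin, nsmul_eq_mul]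
    positivity
  have hrow : ∀ i, ∑ s, A i s * t ^ d = c * t ^ d := fun i =>
    congrFun (fuzzyOp_mulVec_const hsum (t ^ d)) i
  have hnhds : ∀ᶠ u in 𝓝 (barycenter q), ∀ s, 0 < u s := eventually_all.2 fun s =>
    ((continuous_apply s).tendsto _).eventually_const_lt (by simpa [barycenter] using NeZero.pos q)
  have hderiv := fun i => ((hasFDerivAt_sum_mul_pow (A i) d (barycenter q)).mul
    ((hasDerivAt_inv hD).comp_hasFDerivAt (barycenter q)
      (hasFDerivAt_sum_mul_pow (fun _ => c) d (barycenter q)))).congr_of_eventuallyEq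
    (hnhds.mono fun u hu => Smap_apply_of_pos d hu i)
  rw [(hasFDerivAt_pi.2 hderiv).fderiv]
  ext i
  simp only [ContinuousLinearMap.coe_pi', Pi.sub_apply, Pi.smul_apply, _root_.add_apply,
    _root_.smul_apply, _root_.neg_apply, _root_.sum_apply, ContinuousLinearMap.proj_apply,
    Function.comp_apply, smul_eq_mul, neg_smul, smul_neg, _root_.mul_inv_rev, barycenter, ← ht,
    hrow, sum_const, card_univ, Fintype.card_fin, nsmul_eq_mul]
  have hk : (d : ℝ) * t ^ (d - 1) = d * t ^ d * q := by
    rcases d with _ | d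
    · simp
    · rw [Nat.add_sub_cancel, pow_succ]
      linear_combination (-((d + 1 : ℕ) : ℝ) * t ^ d) * htq
  have hAv : ∑ s, A i s * (d * t ^ (d - 1)) * v s = d * t ^ (d - 1) * (A *ᵥ v) i := by
    rw [mulVec, dotProduct, mul_sum]
    exact sum_congr rfl fun s _ => by ring
  rw [← mul_sum, hAv, hk]
  field_simp
  ring

lemma fderiv_Smap_barycenter_of_sum_eq_zero (hpos : ∀ n, 0 < Q n) (hsum : Summable Q) (d : ℕ)
    [NeZero q] {v : Fin q → ℝ} (hv : ∑ j, v j = 0) :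
    fderiv ℝ (Smap Q q d) (barycenter q) v = ((d / fourierTransform Q 0) • fuzzyOp Q q) *ᵥ v := by
  rw [fderiv_Smap_barycenter hpos hsum, hv, smul_mulVec, mul_zero, sub_eq_self]
  rfl

end Derivative

theorem stmt0_general (Q : ℤ → ℝ) (hpos : ∀ n : ℤ, 0 < Q n) (hsymm : ∀ n : ℤ, Q (-n) = Q n)
    (hsum : Summable Q) (d q : ℕ) (hq : 2 ≤ q) :
    (∀ v : Fin q → ℝ, ∑ i, v i = 0 →
      ∑ i, fderiv ℝ (Smap Q q d) (barycenter q) v i = 0) ∧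
    {μ : ℝ | ∃ v : Fin q → ℝ, v ≠ 0 ∧ ∑ i, v i = 0 ∧
        fderiv ℝ (Smap Q q d) (barycenter q) v = μ • v}
      = {μ : ℝ | ∃ j : ℕ, 1 ≤ j ∧ j ≤ q / 2 ∧
          μ = d * fourierTransform Q (2 * Real.pi * j / q) / fourierTransform Q 0} := by
  have : NeZero q := ⟨by omega⟩
  have hT {v : Fin q → ℝ} (hv : ∑ i, v i = 0) :=
    fderiv_Smap_barycenter_of_sum_eq_zero hpos hsum d hv
  have hmode (j : ℕ) (α : ℝ) : ((d / fourierTransform Q 0) • fuzzyOp Q q) *ᵥ cosMode q j α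
      = (d * fourierTransform Q (2 * π * j / q) / fourierTransform Q 0) • cosMode q j α := by
    rw [smul_mulVec, fuzzyOp_mulVec_cosMode hsymm hsum, smul_smul, div_mul_eq_mul_div]
  refine ⟨fun v hv => ?_, Set.ext fun μ => ⟨?_, ?_⟩⟩
  · simp [hT hv, smul_mulVec, ← mul_sum, sum_fuzzyOp_mulVec hsymm hsum, hv]
  · rintro ⟨v, hv0, hv, hμ⟩
    obtain ⟨j, hj0, hjq, rfl⟩ := ((fuzzyOp_isSymm hsymm q).smul _).exists_cosMode_eigenvalue_eq
      hmode hv0 hv ((hT hv).symm.trans hμ)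
    obtain ⟨k, hk1, hkq, hk⟩ := exists_le_half_fourierTransform_eq Q hj0 hjq
    exact ⟨k, hk1, hkq, by rw [hk]⟩
  · rintro ⟨j, hj1, hj2, rfl⟩
    have hsum0 : ∑ s, cosMode q j 0 s = 0 :=
      sum_cosMode_eq_zero (fun h => by have := Nat.le_of_dvd hj1 h; omega) 0
    refine ⟨cosMode q j 0, fun h => by simpa [cosMode] using congrFun h 0, hsum0, ?_⟩
    rw [hT hsum0, hmode]

theorem stmt0 (Q : ℤ → ℝ) (hpos : ∀ n : ℤ, 0 < Q n) (hsymm : ∀ n : ℤ, Q (-n) = Q n)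
    (hsum : Summable Q) (d q : ℕ) (hd : 2 ≤ d) (hq : 2 ≤ q) :
    (∀ v : Fin q → ℝ, ∑ i, v i = 0 →
      ∑ i, fderiv ℝ (Smap Q q d) (barycenter q) v i = 0) ∧
    {μ : ℝ | ∃ v : Fin q → ℝ, v ≠ 0 ∧ ∑ i, v i = 0 ∧
        fderiv ℝ (Smap Q q d) (barycenter q) v = μ • v}
      = {μ : ℝ | ∃ j : ℕ, 1 ≤ j ∧ j ≤ q / 2 ∧
          μ = d * fourierTransform Q (2 * Real.pi * j / q) / fourierTransform Q 0} :=
  stmt0_general Q hpos hsymm hsum d q hq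
end

section
/- Let Q be a transfer operator and d ≥ 2 an integer. Then there exists a finite minimal period q₀ such that for every integer q ≥ q₀ there exists an index j ∈ {1,…,⌊q/2⌋} with d·|Q̂(2πj/q)| > Q̂(0); that is, at least one eigenvalue of the linearization of S_q at the barycenter on the tangent hyperplane is larger than one in absolute value. -/
open scoped BigOperators

theorem stmt3 (Q : ℤ → ℝ) (hpos : ∀ n : ℤ, 0 < Q n) (hsymm : ∀ n : ℤ, Q (-n) = Q n)
    (hsum : Summable Q) (d : ℕ) (hd : 2 ≤ d) :
    ∃ q₀ : ℕ, ∀ q : ℕ, q₀ ≤ q →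
      ∃ j : ℕ, 1 ≤ j ∧ j ≤ q / 2 ∧
        (d : ℝ) * |fourierTransform Q (2 * Real.pi * j / q)| > fourierTransform Q 0 := by
  have hQ0 : 0 < fourierTransform Q 0 := by
    have h0 : fourierTransform Q 0 = ∑' n : ℤ, Q n := by
      unfold fourierTransform; simp
    rw [h0]
    exact Summable.tsum_pos hsum (fun n => (hpos n).le) 0 (hpos 0)
  have hcont : Continuous (fourierTransform Q) := by
    apply continuous_tsum (u := fun n : ℤ => Q n)
    · intro n; fun_prop
    · exact hsum
    · intro n x
      rw [norm_mul, Real.norm_eq_abs, Real.norm_eq_abs, abs_of_pos (hpos n)]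
      exact mul_le_of_le_one_right (hpos n).le (Real.abs_cos_le_one _)
  have htend : Filter.Tendsto (fun q : ℕ => fourierTransform Q (2 * Real.pi * 1 / q))
      Filter.atTop (nhds (fourierTransform Q 0)) := by
    have h1 : Filter.Tendsto (fun q : ℕ => 2 * Real.pi * 1 / (q : ℝ))
        Filter.atTop (nhds 0) := tendsto_const_div_atTop_nhds_zero_nat _
    exact (hcont.continuousAt (x := 0)).tendsto.comp h1
  have hev : ∀ᶠ q : ℕ in Filter.atTop,
      fourierTransform Q (2 * Real.pi * 1 / q) > fourierTransform Q 0 / 2 := by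
    exact htend.eventually (eventually_gt_nhds (by linarith))
  obtain ⟨q₀, hq₀⟩ := (hev.and (Filter.eventually_ge_atTop 2)).exists_forall_of_atTop
  refine ⟨q₀, fun q hq => ?_⟩
  obtain ⟨hgt, hq2⟩ := hq₀ q hq
  refine ⟨1, le_refl 1, Nat.one_le_div_iff (by norm_num) |>.2 hq2, ?_⟩
  have hpos' : 0 < fourierTransform Q (2 * Real.pi * 1 / q) := by linarith
  have habs : |fourierTransform Q (2 * Real.pi * (1:ℕ) / q)| =
      fourierTransform Q (2 * Real.pi * 1 / q) := by
    push_cast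
    exact abs_of_pos hpos'
  rw [habs]
  have hd' : (2 : ℝ) ≤ d := by exact_mod_cast hd
  nlinarith
end

section
/- Let Q be a transfer operator, d ≥ 2 an integer and u ≥ 1 any integer. Then there exists a finite minimal period q₀(d,u) such that for every integer q ≥ q₀(d,u) there are at least u indices j ∈ {1,…,⌊q/2⌋} with d·|Q̂(2πj/q)| > Q̂(0); that is, at least u eigenvalues of the linearization of S_q at the barycenter on the tangent hyperplane are larger than one in absolute value. -/
open scoped BigOperators

theorem stmt4 (Q : ℤ → ℝ) (hpos : ∀ n : ℤ, 0 < Q n) (hsymm : ∀ n : ℤ, Q (-n) = Q n)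
    (hsum : Summable Q) (d : ℕ) (hd : 2 ≤ d) (u : ℕ) (hu : 1 ≤ u) :
    ∃ q₀ : ℕ, ∀ q : ℕ, q₀ ≤ q →
      ∃ J : Finset ℕ, J ⊆ Finset.Icc 1 (q / 2) ∧ u ≤ J.card ∧
        ∀ j ∈ J, (d : ℝ) * |fourierTransform Q (2 * Real.pi * j / q)|
          > fourierTransform Q 0 := by
  have hQ0 : fourierTransform Q 0 = ∑' n : ℤ, Q n := by
    unfold fourierTransform; simp
  have hQabs : Summable (fun n : ℤ => |Q n|) := by
    simpa [abs_of_pos (hpos _)] using hsum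
  have hcont : Continuous (fourierTransform Q) := by
    apply continuous_tsum (f := fun (n : ℤ) (x : ℝ) => Q n * Real.cos (n * x))
      (fun n => by continuity) hQabs
    intro n x
    rw [Real.norm_eq_abs, abs_mul]
    calc |Q n| * |Real.cos (n * x)| ≤ |Q n| * 1 :=
          mul_le_mul_of_nonneg_left (Real.abs_cos_le_one _) (abs_nonneg _)
      _ = |Q n| := mul_one _
  have hpos0 : 0 < fourierTransform Q 0 := by
    rw [hQ0]
    exact Summable.tsum_pos hsum (fun n => (hpos n).le) 0 (hpos 0)
  have hεpos : 0 < fourierTransform Q 0 / 2 := by linarith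
  obtain ⟨δ, hδpos, hδ⟩ := Metric.continuousAt_iff.mp (hcont.continuousAt (x := 0))
    (fourierTransform Q 0 / 2) hεpos
  have hπ := Real.pi_pos
  refine ⟨max (2 * u) (⌈2 * Real.pi * u / δ⌉₊ + 1), fun q hq => ?_⟩
  have hq1 : 2 * u ≤ q := le_trans (le_max_left _ _) hq
  have hq2 : (2 * Real.pi * u / δ : ℝ) < q := by
    have h1 : (2 * Real.pi * u / δ : ℝ) < (⌈2 * Real.pi * u / δ⌉₊ + 1 : ℕ) := by
      push_cast
      exact lt_of_le_of_lt (Nat.le_ceil _) (by linarith)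
    exact lt_of_lt_of_le h1 (by exact_mod_cast le_trans (le_max_right _ _) hq)
  have hqpos : 0 < q := by omega
  have hqR : (0 : ℝ) < q := by exact_mod_cast hqpos
  refine ⟨Finset.Icc 1 u, ?_, ?_, ?_⟩
  · intro j hj
    simp only [Finset.mem_Icc] at hj ⊢
    exact ⟨hj.1, le_trans hj.2 (by omega)⟩
  · simp
  · intro j hj
    simp only [Finset.mem_Icc] at hj
    set k : ℝ := 2 * Real.pi * j / q with hk
    have hknn : 0 ≤ k := by positivity
    have hkδ : k < δ := by
      have hjle : (j : ℝ) ≤ (u : ℝ) := by exact_mod_cast hj.2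
      have : k ≤ 2 * Real.pi * u / q := by
        rw [hk]
        gcongr
      have h2 : 2 * Real.pi * u / q < δ := by
        rw [div_lt_iff₀ hqR]
        calc 2 * Real.pi * u = (2 * Real.pi * u / δ) * δ := by field_simp
          _ < q * δ := by apply mul_lt_mul_of_pos_right hq2 hδpos
          _ = δ * q := mul_comm _ _
      linarith
    have hdist : dist k 0 < δ := by
      rw [Real.dist_eq, sub_zero, abs_of_nonneg hknn]; exact hkδ
    have := hδ hdist
    rw [Real.dist_eq] at this
    have hQk : fourierTransform Q 0 / 2 < fourierTransform Q k := by
      have := abs_lt.mp this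
      linarith [this.1]
    have habs : fourierTransform Q k ≤ |fourierTransform Q k| := le_abs_self _
    have hdR : (2 : ℝ) ≤ (d : ℝ) := by exact_mod_cast hd
    have : fourierTransform Q 0 < (d : ℝ) * |fourierTransform Q k| := by
      nlinarith [abs_nonneg (fourierTransform Q k)]
    exact this
end

section
/- Let (X,ρ) be a metric space, e ∈ X, ε > 0 and γ ∈ (0,1). Let B = {x ∈ X : ρ(x,e) ≤ ε} and let (F_n)_{n≥1} be a sequence of maps F_n : B → X such that ρ(F_n(x),F_n(y)) ≤ γ·ρ(x,y) for all x,y ∈ B and all n, ρ(F_n(e),e) ≤ (1−γ)·ε for all n, and ρ(F_n(e),e) → 0 as n → ∞. Then for every z ∈ B, the iterates z₀ = z, z_n = F_n(z_{n−1}) are well defined, i.e. z_n ∈ B for all n, and z_n → e as n → ∞. -/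
/-!
The distances `a n = dist z_n e` satisfy `a (n+1) ≤ γ a n + dist (F_{n+1} e) e`: compare
`F_{n+1} z_n` with `F_{n+1} e` and use the triangle inequality. With `a n ≤ ε` and the bound
`(1 - γ) ε` on the displacement of the center, this keeps the orbit in the ball. Once the
displacement is below `(1 - γ) η`, the excess `a n - η` contracts by the factor `γ`, so
`limsup a ≤ η` for every `η > 0`.
-/

/-- Iterates `z₀ = z`, `z_n = F_n(z_{n-1})` for `n ≥ 1`. -/
def iterSeq {X : Type*} (F : ℕ → X → X) (z : X) : ℕ → X
  | 0 => z
  | n + 1 => F (n + 1) (iterSeq F z n)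

open Filter Topology

theorem tendsto_zero_of_le_mul_add {a b : ℕ → ℝ} {γ : ℝ} (ha : ∀ n, 0 ≤ a n) (hγ0 : 0 ≤ γ)
    (hγ1 : γ < 1) (hrec : ∀ n, a (n + 1) ≤ γ * a n + b n) (hb : Tendsto b atTop (𝓝 0)) :
    Tendsto a atTop (𝓝 0) := by
  refine tendsto_order.2 ⟨fun δ hδ => Eventually.of_forall fun n => hδ.trans_le (ha n),
    fun δ hδ => ?_⟩
  set η := δ / 2 with hη_def
  have hη : 0 < η := half_pos hδ
  obtain ⟨N, hN⟩ := eventually_atTop.1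
    (hb.eventually (gt_mem_nhds (mul_pos (sub_pos.2 hγ1) hη)))
  have hdecay : ∀ k, a (N + k) - η ≤ γ ^ k * (a N - η) := fun k =>
    le_geom (u := fun k => a (N + k) - η) hγ0 k fun j _ => by
      have hbj := hN (N + j) (Nat.le_add_right N j)
      have hrecj := hrec (N + j)
      simp only [← add_assoc]
      linarith
  have hgeom : Tendsto (fun n => γ ^ (n - N) * (a N - η)) atTop (𝓝 0) := by
    simpa using ((tendsto_pow_atTop_nhds_zero_of_lt_one hγ0 hγ1).comp
      (tendsto_sub_atTop_nat N)).mul_const (a N - η)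
  filter_upwards [eventually_ge_atTop N, hgeom.eventually (gt_mem_nhds hη)] with n hn hsmall
  have hexcess := hdecay (n - N)
  rw [Nat.add_sub_cancel' hn] at hexcess
  linarith [hη_def]

theorem dist_le_mul_add_dist_of_dist_map_le {X : Type*} [PseudoMetricSpace X] {f : X → X}
    {x e : X} {γ : ℝ} (hf : dist (f x) (f e) ≤ γ * dist x e) :
    dist (f x) e ≤ γ * dist x e + dist (f e) e :=
  (dist_triangle _ _ _).trans (add_le_add_left hf _)

section iterSeq

variable {X : Type*} [MetricSpace X] {e z : X} {ε γ : ℝ} {F : ℕ → X → X}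

theorem dist_iterSeq_succ_le
    (hcontr : ∀ n : ℕ, 1 ≤ n → ∀ x y : X, dist x e ≤ ε → dist y e ≤ ε →
      dist (F n x) (F n y) ≤ γ * dist x y)
    {n : ℕ} (hn : dist (iterSeq F z n) e ≤ ε) :
    dist (iterSeq F z (n + 1)) e ≤ γ * dist (iterSeq F z n) e + dist (F (n + 1) e) e :=
  dist_le_mul_add_dist_of_dist_map_le <|
    hcontr (n + 1) n.succ_pos _ e hn (by simpa using dist_nonneg.trans hn)

theorem dist_iterSeq_le (hγ0 : 0 < γ)
    (hcontr : ∀ n : ℕ, 1 ≤ n → ∀ x y : X, dist x e ≤ ε → dist y e ≤ ε →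
      dist (F n x) (F n y) ≤ γ * dist x y)
    (hcenter : ∀ n : ℕ, 1 ≤ n → dist (F n e) e ≤ (1 - γ) * ε) (hz : dist z e ≤ ε) (n : ℕ) :
    dist (iterSeq F z n) e ≤ ε := by
  induction n with
  | zero => exact hz
  | succ n ih =>
    have hstep := dist_iterSeq_succ_le hcontr ih
    have hcen := hcenter (n + 1) n.succ_pos
    have hscaled := mul_le_mul_of_nonneg_left ih hγ0.le
    linarith

end iterSeq

theorem stmt7_general {X : Type*} [MetricSpace X] (e : X) (ε : ℝ)
    (γ : ℝ) (hγ0 : 0 < γ) (hγ1 : γ < 1) (F : ℕ → X → X)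
    (hcontr : ∀ n : ℕ, 1 ≤ n → ∀ x y : X, dist x e ≤ ε → dist y e ≤ ε →
      dist (F n x) (F n y) ≤ γ * dist x y)
    (hcenter : ∀ n : ℕ, 1 ≤ n → dist (F n e) e ≤ (1 - γ) * ε)
    (hlim : Filter.Tendsto (fun n => dist (F n e) e) Filter.atTop (nhds 0)) :
    ∀ z : X, dist z e ≤ ε →
      (∀ n : ℕ, dist (iterSeq F z n) e ≤ ε) ∧
      Filter.Tendsto (iterSeq F z) Filter.atTop (nhds e) := by
  intro z hz
  have hball := dist_iterSeq_le hγ0 hcontr hcenter hz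
  refine ⟨hball, tendsto_iff_dist_tendsto_zero.2 ?_⟩
  exact tendsto_zero_of_le_mul_add (fun _ => dist_nonneg) hγ0.le hγ1
    (fun n => dist_iterSeq_succ_le hcontr (hball n)) (hlim.comp (tendsto_add_atTop_nat 1))

theorem stmt7 {X : Type*} [MetricSpace X] (e : X) (ε : ℝ) (hε : 0 < ε)
    (γ : ℝ) (hγ0 : 0 < γ) (hγ1 : γ < 1) (F : ℕ → X → X)
    (hcontr : ∀ n : ℕ, 1 ≤ n → ∀ x y : X, dist x e ≤ ε → dist y e ≤ ε →
      dist (F n x) (F n y) ≤ γ * dist x y)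
    (hcenter : ∀ n : ℕ, 1 ≤ n → dist (F n e) e ≤ (1 - γ) * ε)
    (hlim : Filter.Tendsto (fun n => dist (F n e) e) Filter.atTop (nhds 0)) :
    ∀ z : X, dist z e ≤ ε →
      (∀ n : ℕ, dist (iterSeq F z n) e ≤ ε) ∧
      Filter.Tendsto (iterSeq F z) Filter.atTop (nhds e) :=
  stmt7_general e ε γ hγ0 hγ1 F hcontr hcenter hlim
end

section
/- Let Q be a transfer operator, d ≥ 2 and q ≥ 2 integers, and c > 0. Let E ⊆ {v ∈ ℝ^q : ∑_i v_i = 0} be a linear subspace such that either ⟨Q^q v, v⟩ ≥ c·‖v‖² for all v ∈ E, or ⟨Q^q v, v⟩ ≤ −c·‖v‖² for all v ∈ E. Let V ⊆ E be an open neighborhood of 0 and h : V → ℝ^q a C^∞ map with h(0) = 0, vanishing differential Dh[0] = 0, ∑_i h(v)_i = 0 for all v ∈ V, and ⟨h(v), w⟩ = 0 for all v ∈ V and w ∈ E. Put u(v) = eq + v + h(v). Then there exist a constant C > 0 and a neighborhood V′ ⊆ V of 0 such that for all v ∈ V′: max_{0≤j≤q−1} | ⟨ (Q^q u(v)^{⊙d})^{⊙d}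 , (T_j u(v))^{⊙d} − u(v)^{⊙d} ⟩ | ≥ C·‖v‖². -/
set_option maxHeartbeats 1600000
set_option synthInstance.maxHeartbeats 400000

open scoped BigOperators

/-- Euclidean norm on `ℝ^q`. -/
noncomputable def twoNorm {q : ℕ} (v : Fin q → ℝ) : ℝ :=
  Real.sqrt (∑ i, v i ^ 2)


lemma tail_bound (d : ℕ) (X x e : ℝ) (hX : 0 ≤ X) (hx : |x| ≤ X) (he : |e| ≤ X) :
    |(x + e)^(d+2) - x^(d+2) - ((d:ℝ)+2) * x^(d+1) * e| ≤ 2^(d+2) * X^d * e^2 := by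
  have hexp : (x + e)^(d+2) - x^(d+2) - ((d:ℝ)+2) * x^(d+1) * e
      = ∑ m ∈ Finset.range (d+1), x^m * e^(d+2-m) * (Nat.choose (d+2) m) := by
    rw [add_pow, Finset.sum_range_succ, Finset.sum_range_succ]
    have h1 : d + 2 - (d+1) = 1 := by omega
    have h2 : d + 2 - (d+2) = 0 := by omega
    rw [h1, h2, Nat.choose_succ_self_right, Nat.choose_self]
    push_cast
    ring
  rw [hexp]
  calc |∑ m ∈ Finset.range (d+1), x^m * e^(d+2-m) * (Nat.choose (d+2) m)|
      ≤ ∑ m ∈ Finset.range (d+1), |x^m * e^(d+2-m) * (Nat.choose (d+2) m)| :=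
        Finset.abs_sum_le_sum_abs _ _
    _ ≤ ∑ m ∈ Finset.range (d+1), (Nat.choose (d+2) m : ℝ) * (X^d * e^2) := by
        refine Finset.sum_le_sum fun m hm => ?_
        have hmd : m ≤ d := by simpa [Nat.lt_succ_iff] using hm
        have h3 : d + 2 - m = (d - m) + 2 := by omega
        rw [abs_mul, abs_mul, abs_pow, abs_pow, h3, pow_add, sq_abs]
        have hb1 : |x|^m ≤ X^m := pow_le_pow_left₀ (abs_nonneg _) hx m
        have hb2 : |e|^(d-m) ≤ X^(d-m) := pow_le_pow_left₀ (abs_nonneg _) he _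
        have habs : |(Nat.choose (d+2) m : ℝ)| = (Nat.choose (d+2) m : ℝ) :=
          abs_of_nonneg (by positivity)
        rw [habs]
        have : |x|^m * (|e|^(d-m) * e^2) ≤ X^m * (X^(d-m) * e^2) := by
          apply mul_le_mul hb1 (mul_le_mul_of_nonneg_right hb2 (sq_nonneg e))
            (by positivity) (by positivity)
        calc |x| ^ m * (|e| ^ (d - m) * e ^ 2) * ↑((d + 2).choose m)
            ≤ X^m * (X^(d-m) * e^2) * ↑((d + 2).choose m) := by
              apply mul_le_mul_of_nonneg_right this (by positivity)
          _ = (Nat.choose (d+2) m : ℝ) * (X^d * e^2) := by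
              have hpow : X^m * X^(d-m) = X^d := by
                rw [← pow_add]; congr 1; omega
              calc X^m * (X^(d-m) * e^2) * ↑((d + 2).choose m)
                  = X^m * X^(d-m) * e^2 * ↑((d + 2).choose m) := by ring
                _ = (Nat.choose (d+2) m : ℝ) * (X^d * e^2) := by rw [hpow]; ring
    _ = (∑ m ∈ Finset.range (d+1), (Nat.choose (d+2) m : ℝ)) * (X^d * e^2) := by
        rw [Finset.sum_mul]
    _ ≤ 2^(d+2) * X^d * e^2 := by
        have hn : (∑ m ∈ Finset.range (d+1), Nat.choose (d+2) m) ≤ 2^(d+2) := by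
          calc (∑ m ∈ Finset.range (d+1), Nat.choose (d+2) m)
              ≤ ∑ m ∈ Finset.range (d+3), Nat.choose (d+2) m :=
                Finset.sum_le_sum_of_subset (by intro x hx; simp at hx ⊢; omega)
            _ = 2^(d+2) := Nat.sum_range_choose _
        have : ((∑ m ∈ Finset.range (d+1), Nat.choose (d+2) m : ℕ) : ℝ) ≤ (2:ℝ)^(d+2) := by
          exact_mod_cast hn
        push_cast at this ⊢
        calc (∑ m ∈ Finset.range (d+1), ((d + 2).choose m : ℝ)) * (X^d * e^2)
            ≤ 2^(d+2) * (X^d * e^2) :=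
              mul_le_mul_of_nonneg_right this (by positivity)
          _ = 2^(d+2) * X^d * e^2 := by ring


lemma mulVec_apply' {q : ℕ} (M : Matrix (Fin q) (Fin q) ℝ) (x : Fin q → ℝ) (i : Fin q) :
    M.mulVec x i = ∑ s, M i s * x s := by
  simp [Matrix.mulVec, dotProduct]

lemma mv_bound {q : ℕ} (M : Matrix (Fin q) (Fin q) ℝ) (sg X : ℝ)
    (Mnn : ∀ r s, 0 ≤ M r s) (hrow : ∀ r : Fin q, ∑ s, M r s = sg)
    (x : Fin q → ℝ) (hx : ∀ s, |x s| ≤ X) (i : Fin q) :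
    |M.mulVec x i| ≤ sg * X := by
  rw [mulVec_apply']
  calc |∑ s, M i s * x s| ≤ ∑ s, |M i s * x s| := Finset.abs_sum_le_sum_abs _ _
    _ ≤ ∑ s, M i s * X := by
        refine Finset.sum_le_sum fun s _ => ?_
        rw [abs_mul, abs_of_nonneg (Mnn i s)]
        exact mul_le_mul_of_nonneg_left (hx s) (Mnn i s)
    _ = sg * X := by rw [← Finset.sum_mul, hrow]

lemma ip_bound {q : ℕ} (M : Matrix (Fin q) (Fin q) ℝ) (sg X Y : ℝ)
    (Mnn : ∀ r s, 0 ≤ M r s) (hrow : ∀ r : Fin q, ∑ s, M r s = sg)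
    (hsgX : 0 ≤ sg * X)
    (x y : Fin q → ℝ) (hx : ∀ s, |x s| ≤ X) (hy : ∀ i, |y i| ≤ Y) :
    |∑ i, M.mulVec x i * y i| ≤ q * (sg * X * Y) := by
  calc |∑ i, M.mulVec x i * y i| ≤ ∑ i, |M.mulVec x i * y i| := Finset.abs_sum_le_sum_abs _ _
    _ ≤ ∑ _i : Fin q, sg * X * Y := by
        refine Finset.sum_le_sum fun i _ => ?_
        rw [abs_mul]
        exact mul_le_mul (mv_bound M sg X Mnn hrow x hx i) (hy i) (abs_nonneg _) hsgX
    _ = q * (sg * X * Y) := by simp [Finset.sum_const, mul_comm]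

section Fuzzy
variable (Q : ℤ → ℝ) (q : ℕ) [NeZero q]

lemma fin_sub_key (r s : Fin q) :
    ∃ k : ℤ, ((s - r : Fin q) : ℤ) = (s : ℤ) - (r : ℤ) + q * k := by
  have hdef : ((s - r : Fin q) : ℕ) = (q - r.val + s.val) % q := by
    rw [Fin.sub_def]
  set a := q - r.val + s.val with ha
  have hmod : a % q + q * (a / q) = a := Nat.mod_add_div a q
  have hrq : r.val < q := r.isLt
  refine ⟨1 - ((a / q : ℕ) : ℤ), ?_⟩
  have hcast : ((s - r : Fin q) : ℤ) = ((a % q : ℕ) : ℤ) := by exact_mod_cast hdef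
  have hmodz : ((a % q : ℕ) : ℤ) + (q : ℤ) * ((a / q : ℕ) : ℤ) = (a : ℤ) := by
    exact_mod_cast hmod
  have hqD : (q : ℤ) * (1 - ((a / q : ℕ) : ℤ)) = (q : ℤ) - (q : ℤ) * ((a / q : ℕ) : ℤ) := by
    ring
  rw [hcast, hqD]
  omega

lemma fuzzyOp_shift (r s : Fin q) :
    fuzzyOp Q q r s = fuzzyOp Q q 0 (s - r) := by
  obtain ⟨k, hk⟩ := fin_sub_key q r s
  show (∑' m : ℤ, Q ((r : ℤ) - (s : ℤ) + q * m))
      = ∑' m : ℤ, Q (((0 : Fin q) : ℤ) - ((s - r : Fin q) : ℤ) + q * m)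
  have hcong : ∀ m : ℤ, Q (((0 : Fin q) : ℤ) - ((s - r : Fin q) : ℤ) + q * m)
      = Q ((r : ℤ) - (s : ℤ) + q * (m - k)) := by
    intro m
    congr 1
    have h0 : (((0 : Fin q)) : ℤ) = 0 := by simp
    rw [h0, hk]; ring
  rw [tsum_congr hcong]
  exact ((Equiv.subRight k).tsum_eq (fun m => Q ((r : ℤ) - (s : ℤ) + q * m))).symm

lemma fuzzyOp_nonneg (hpos : ∀ n : ℤ, 0 < Q n) (r s : Fin q) : 0 ≤ fuzzyOp Q q r s :=
  tsum_nonneg fun _ => (hpos _).le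

lemma fuzzyOp_summable (hsum : Summable Q) (r s : Fin q) :
    Summable (fun m : ℤ => Q ((r : ℤ) - (s : ℤ) + q * m)) := by
  have hinj : Function.Injective (fun m : ℤ => (r : ℤ) - (s : ℤ) + q * m) := by
    intro a b hab
    simp only at hab
    have hq' : (q : ℤ) ≠ 0 := by exact_mod_cast (NeZero.pos q).ne'
    exact mul_left_cancel₀ hq' (add_left_cancel hab)
  exact hsum.comp_injective hinj

lemma fuzzyOp_diag_pos (hpos : ∀ n : ℤ, 0 < Q n) (hsum : Summable Q) :
    0 < fuzzyOp Q q 0 0 :=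
  Summable.tsum_pos (fuzzyOp_summable Q q hsum 0 0) (fun _ => (hpos _).le) 0 (hpos _)

lemma fuzzyOp_rowsum (r : Fin q) :
    ∑ s, fuzzyOp Q q r s = ∑ s, fuzzyOp Q q 0 s := by
  rw [Finset.sum_congr rfl (fun s _ => fuzzyOp_shift Q q r s)]
  exact Fintype.sum_equiv (Equiv.subRight r) _ _ (fun s => rfl)

lemma fuzzyOp_colsum (s : Fin q) :
    ∑ r, fuzzyOp Q q r s = ∑ t, fuzzyOp Q q 0 t := by
  rw [Finset.sum_congr rfl (fun r _ => fuzzyOp_shift Q q r s)]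
  exact Fintype.sum_equiv (Equiv.subLeft s) _ _ (fun r => rfl)

end Fuzzy

lemma core (q d : ℕ) (hq : 2 ≤ q) (hd2 : 2 ≤ d) [NeZero q]
    (M : Matrix (Fin q) (Fin q) ℝ) (sg c L : ℝ)
    (Mnn : ∀ r s, 0 ≤ M r s) (hsg : 0 < sg)
    (hrow : ∀ r : Fin q, ∑ s, M r s = sg) (hcol : ∀ s : Fin q, ∑ r, M r s = sg)
    (hc : 0 < c) (hL : 0 ≤ L) :
    ∃ δ : ℝ, 0 < δ ∧ ∃ Cs : ℝ, 0 < Cs ∧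
    ∀ (v hv : Fin q → ℝ) (t : ℝ), 0 ≤ t → t ≤ δ →
      (∀ i, |v i| ≤ t) →
      (∑ i, v i = 0) → (∑ i, hv i = 0) →
      (∀ i, |hv i| ≤ L * t^2) →
      (c * t^2 ≤ |∑ i, M.mulVec v i * v i|) →
      ∃ j : Fin q,
        Cs * t^2 ≤ |∑ i, (M.mulVec (fun r => (1/(q:ℝ) + v r + hv r)^d) i)^d *
          ((1/(q:ℝ) + v (i+j) + hv (i+j))^d - (1/(q:ℝ) + v i + hv i)^d)| := by
  obtain ⟨d', rfl⟩ : ∃ d', d = d' + 2 := ⟨d - 2, by omega⟩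
  have hq0 : (0:ℝ) < q := by positivity
  have hq1 : (1:ℝ) ≤ q := by exact_mod_cast (by omega : 1 ≤ q)
  set dd : ℝ := (d' : ℝ) + 2 with hdd
  set lam : ℝ := dd * (1/(q:ℝ))^(d'+1) with hlam
  set b : ℝ := (1/(q:ℝ))^(d'+2) with hb
  set Bz : ℝ := 2^(d'+2) with hBz
  set CR : ℝ := 4 * Bz with hCR
  set C1 : ℝ := 2*lam + CR with hC1
  set BA : ℝ := 2^(d'+2) * (sg*b+1)^d' with hBA
  set CRR : ℝ := BA * (sg*C1)^2 with hCRR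
  set Cg : ℝ := lam * L + CR with hCg
  set C2 : ℝ := q * sg * (2*lam*Cg + Cg^2) with hC2
  set K : ℝ := q * dd * (sg*b)^(d'+1) * lam^2 with hK
  set Ce : ℝ := dd*(sg*b)^(d'+1)*sg*(q:ℝ)^2*CR^2 + q*dd*(sg*b)^(d'+1)*C2
      + (q:ℝ)^2*CRR*(CR+C1) with hCe
  have hddpos : 0 < dd := by positivity
  have hlampos : 0 < lam := by positivity
  have hbpos : 0 < b := by positivity
  have hBzpos : 0 < Bz := by positivity
  have hCRpos : 0 < CR := by positivity
  have hC1pos : 0 < C1 := by positivity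
  have hCgpos : 0 < Cg := by positivity
  have hCRRpos : 0 < CRR := by positivity
  have hKpos : 0 < K := by positivity
  have hCepos : 0 < Ce := by positivity
  refine ⟨min (min (1/2) (1/(L+1))) (min (1/(sg*C1+1)) (K*c/(2*Ce+1))), by positivity,
    K*c/(2*q), by positivity, ?_⟩
  intro v hv t ht0 htδ hvt hvsum hhvsum hhb hdefv
  have ht1 : t ≤ 1/2 := le_trans htδ (le_trans (min_le_left _ _) (min_le_left _ _))
  have ht1' : t ≤ 1 := le_trans ht1 (by norm_num)
  have htL : t ≤ 1/(L+1) := le_trans htδ (le_trans (min_le_left _ _) (min_le_right _ _))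
  have htC1 : t ≤ 1/(sg*C1+1) := le_trans htδ (le_trans (min_le_right _ _) (min_le_left _ _))
  have htK : t ≤ K*c/(2*Ce+1) := le_trans htδ (le_trans (min_le_right _ _) (min_le_right _ _))
  have hLt : L * t ≤ 1 := by
    calc L * t ≤ L * (1/(L+1)) := mul_le_mul_of_nonneg_left htL hL
      _ = L/(L+1) := by ring
      _ ≤ 1 := div_le_one_of_le₀ (by linarith) (by positivity)
  have hsgC1t : sg * C1 * t ≤ 1 := by
    calc sg * C1 * t ≤ sg * C1 * (1/(sg*C1+1)) :=
          mul_le_mul_of_nonneg_left htC1 (by positivity)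
      _ = (sg*C1)/(sg*C1+1) := by ring
      _ ≤ 1 := div_le_one_of_le₀ (by linarith) (by positivity)
  -- main objects
  set w : Fin q → ℝ := fun i => v i + hv i with hwdef
  set y : Fin q → ℝ := fun r => (1/(q:ℝ) + v r + hv r)^(d'+2) with hydef
  have hyw : ∀ i, y i = (1/(q:ℝ) + w i)^(d'+2) := by
    intro i; simp only [hydef, hwdef]; ring_nf
  set z : Fin q → ℝ := fun i => y i - b with hzdef
  set Z : ℝ := ∑ i, z i with hZdef
  set mz : Fin q → ℝ := M.mulVec z with hmzdef
  set A : Fin q → ℝ := fun i => (M.mulVec y i)^(d'+2) with hAdef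
  set rr : Fin q → ℝ := fun i => z i - lam * w i with hrrdef
  set g : Fin q → ℝ := fun i => lam * hv i + rr i with hgdef
  set ipvv : ℝ := ∑ i, M.mulVec v i * v i with hipvvdef
  set ipzz : ℝ := ∑ i, mz i * z i with hipzzdef
  set F : Fin q → ℝ := fun j => ∑ i, A i * (y (i+j) - y i) with hFdef
  set Sig : ℝ := ∑ j, F j with hSigdef
  -- pointwise bounds
  have hwb : ∀ i, |w i| ≤ 2*t := by
    intro i
    calc |w i| ≤ |v i| + |hv i| := abs_add_le _ _
      _ ≤ t + L*t^2 := add_le_add (hvt i) (hhb i)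
      _ = t + (L*t)*t := by ring
      _ ≤ t + 1*t := by
          have := mul_le_mul_of_nonneg_right hLt ht0
          linarith
      _ = 2*t := by ring
  have hw1 : ∀ i, |w i| ≤ 1 := fun i => le_trans (hwb i) (by linarith)
  have hrrb : ∀ i, |rr i| ≤ CR * t^2 := by
    intro i
    have htb := tail_bound d' 1 (1/(q:ℝ)) (w i) zero_le_one
      (by rw [abs_of_nonneg (by positivity : (0:ℝ) ≤ 1/(q:ℝ))]; exact div_le_one_of_le₀ hq1 hq0.le)
      (hw1 i)
    have heq : rr i = (1/(q:ℝ) + w i)^(d'+2) - (1/(q:ℝ))^(d'+2) - dd*(1/(q:ℝ))^(d'+1)*(w i) := by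
      simp only [hrrdef, hzdef, hyw i, hb, hlam]; try ring
    rw [heq]
    calc |(1/(q:ℝ) + w i)^(d'+2) - (1/(q:ℝ))^(d'+2) - dd*(1/(q:ℝ))^(d'+1)*(w i)|
        ≤ 2^(d'+2) * 1^d' * (w i)^2 := htb
      _ = Bz * (w i)^2 := by rw [hBz]; ring
      _ ≤ Bz * (2*t)^2 := by
          apply mul_le_mul_of_nonneg_left _ hBzpos.le
          calc (w i)^2 = |w i|^2 := (sq_abs _).symm
            _ ≤ (2*t)^2 := pow_le_pow_left₀ (abs_nonneg _) (hwb i) 2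
      _ = CR * t^2 := by rw [hCR]; ring
  have hzw : ∀ i, z i = lam * w i + rr i := by intro i; simp only [hrrdef]; ring
  have hzb : ∀ i, |z i| ≤ C1 * t := by
    intro i
    calc |z i| = |lam * w i + rr i| := by rw [hzw i]
      _ ≤ |lam * w i| + |rr i| := abs_add_le _ _
      _ ≤ lam * (2*t) + CR * t^2 := by
          refine add_le_add ?_ (hrrb i)
          rw [abs_mul, abs_of_nonneg hlampos.le]
          exact mul_le_mul_of_nonneg_left (hwb i) hlampos.le
      _ = 2*lam*t + CR*(t*t) := by ring
      _ ≤ 2*lam*t + CR*(1*t) := by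
          have h1 : t*t ≤ 1*t := mul_le_mul_of_nonneg_right ht1' ht0
          have := mul_le_mul_of_nonneg_left h1 hCRpos.le
          linarith
      _ = C1 * t := by rw [hC1]; ring
  have hwsum : ∑ i, w i = 0 := by
    simp only [hwdef]; rw [Finset.sum_add_distrib, hvsum, hhvsum]; ring
  have hZr : Z = ∑ i, rr i := by
    rw [hZdef]
    calc ∑ i, z i = ∑ i, (lam * w i + rr i) := Finset.sum_congr rfl fun i _ => hzw i
      _ = lam * (∑ i, w i) + ∑ i, rr i := by
          rw [Finset.sum_add_distrib, Finset.mul_sum]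
      _ = ∑ i, rr i := by rw [hwsum]; ring
  have hZb : |Z| ≤ (q:ℝ) * CR * t^2 := by
    rw [hZr]
    calc |∑ i, rr i| ≤ ∑ i, |rr i| := Finset.abs_sum_le_sum_abs _ _
      _ ≤ ∑ _i : Fin q, CR * t^2 := Finset.sum_le_sum fun i _ => hrrb i
      _ = (q:ℝ) * CR * t^2 := by simp [Finset.sum_const, mul_assoc]
  have hmzb : ∀ i, |mz i| ≤ sg * (C1*t) := fun i => mv_bound M sg (C1*t) Mnn hrow z hzb i
  have hmz1 : ∀ i, |mz i| ≤ 1 := by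
    intro i
    calc |mz i| ≤ sg * (C1*t) := hmzb i
      _ = sg * C1 * t := by ring
      _ ≤ 1 := hsgC1t
  -- structure of A
  have hyz : ∀ s, y s = b + z s := by intro s; simp only [hzdef]; ring
  have hmvy : ∀ i, M.mulVec y i = sg*b + mz i := by
    intro i
    calc M.mulVec y i = ∑ s, M i s * y s := mulVec_apply' M y i
      _ = ∑ s, (M i s * b + M i s * z s) := by
          refine Finset.sum_congr rfl fun s _ => ?_
          rw [hyz s]; ring
      _ = (∑ s, M i s) * b + ∑ s, M i s * z s := by
          rw [Finset.sum_add_distrib, Finset.sum_mul]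
      _ = sg*b + mz i := by rw [hrow i, hmzdef, mulVec_apply' M z i]
  set R : Fin q → ℝ := fun i => A i - (sg*b)^(d'+2) - dd*(sg*b)^(d'+1) * mz i with hRdef
  have hRb : ∀ i, |R i| ≤ CRR * t^2 := by
    intro i
    have htb := tail_bound d' (sg*b+1) (sg*b) (mz i)
      (by positivity)
      (by rw [abs_of_nonneg (by positivity : (0:ℝ) ≤ sg*b)]; linarith)
      (le_trans (hmz1 i) (by linarith [mul_pos hsg hbpos]))
    have heq : R i = (sg*b + mz i)^(d'+2) - (sg*b)^(d'+2) - dd*(sg*b)^(d'+1) * mz i := by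
      simp only [hRdef, hAdef, hmvy i]
    rw [heq]
    calc |(sg*b + mz i)^(d'+2) - (sg*b)^(d'+2) - dd*(sg*b)^(d'+1) * mz i|
        ≤ 2^(d'+2) * (sg*b+1)^d' * (mz i)^2 := htb
      _ = BA * (mz i)^2 := by rw [hBA]
      _ ≤ BA * (sg*(C1*t))^2 := by
          apply mul_le_mul_of_nonneg_left _ (by positivity)
          calc (mz i)^2 = |mz i|^2 := (sq_abs _).symm
            _ ≤ (sg*(C1*t))^2 := pow_le_pow_left₀ (abs_nonneg _) (hmzb i) 2
      _ = CRR * t^2 := by rw [hCRR]; ring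
  have hA_decomp : ∀ i, A i = (sg*b)^(d'+2) + dd*(sg*b)^(d'+1) * mz i + R i := by
    intro i; simp only [hRdef]; ring
  -- identity chain
  have hcard : (Finset.univ : Finset (Fin q)).card = q := by simp
  have hYsum : ∑ i, y i = (q:ℝ)*b + Z := by
    calc ∑ i, y i = ∑ i, (b + z i) := Finset.sum_congr rfl fun i _ => hyz i
      _ = (q:ℝ)*b + Z := by
          rw [Finset.sum_add_distrib, Finset.sum_const, hcard, hZdef, nsmul_eq_mul]
  have hshift : ∀ i : Fin q, ∑ j, y (i+j) = ∑ k, y k := by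
    intro i
    exact Fintype.sum_equiv (Equiv.addLeft i) _ _ (fun j => rfl)
  have hSig1 : Sig = ∑ i, A i * (Z - (q:ℝ) * z i) := by
    rw [hSigdef]
    calc ∑ j, F j = ∑ j, ∑ i, A i * (y (i+j) - y i) := rfl
      _ = ∑ i, ∑ j, A i * (y (i+j) - y i) := Finset.sum_comm
      _ = ∑ i, A i * (Z - (q:ℝ) * z i) := by
          refine Finset.sum_congr rfl fun i _ => ?_
          rw [← Finset.mul_sum]
          congr 1
          rw [Finset.sum_sub_distrib, hshift i, hYsum, Finset.sum_const, hcard,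
            nsmul_eq_mul, hyz i]
          ring
  have hmz_sum : ∑ i, mz i = sg * Z := by
    calc ∑ i, mz i = ∑ i, ∑ s, M i s * z s := by
          refine Finset.sum_congr rfl fun i _ => ?_
          rw [hmzdef, mulVec_apply' M z i]
      _ = ∑ s, ∑ i, M i s * z s := Finset.sum_comm
      _ = ∑ s, (∑ i, M i s) * z s := by
          refine Finset.sum_congr rfl fun s _ => ?_
          rw [Finset.sum_mul]
      _ = ∑ s, sg * z s := Finset.sum_congr rfl fun s _ => by rw [hcol s]
      _ = sg * Z := by rw [← Finset.mul_sum, hZdef]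
  have hsum0 : ∑ i, (Z - (q:ℝ) * z i) = 0 := by
    rw [Finset.sum_sub_distrib, Finset.sum_const, hcard, nsmul_eq_mul, ← Finset.mul_sum,
      ← hZdef]
    ring
  have hsum2 : ∑ i, mz i * (Z - (q:ℝ) * z i) = sg * Z^2 - (q:ℝ) * ipzz := by
    calc ∑ i, mz i * (Z - (q:ℝ) * z i)
        = ∑ i, (Z * mz i - (q:ℝ) * (mz i * z i)) := by
          refine Finset.sum_congr rfl fun i _ => ?_; ring
      _ = Z * (∑ i, mz i) - (q:ℝ) * (∑ i, mz i * z i) := by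
          rw [Finset.sum_sub_distrib, ← Finset.mul_sum, ← Finset.mul_sum]
      _ = sg * Z^2 - (q:ℝ) * ipzz := by rw [hmz_sum, ← hipzzdef]; ring
  have hSig2 : Sig = dd*(sg*b)^(d'+1) * (sg * Z^2 - (q:ℝ) * ipzz)
      + ∑ i, R i * (Z - (q:ℝ)*z i) := by
    calc Sig = ∑ i, A i * (Z - (q:ℝ) * z i) := hSig1
      _ = ∑ i, ((sg*b)^(d'+2) * (Z - (q:ℝ)*z i)
            + (dd*(sg*b)^(d'+1)) * (mz i * (Z - (q:ℝ)*z i))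
            + R i * (Z - (q:ℝ)*z i)) := by
          refine Finset.sum_congr rfl fun i _ => ?_
          rw [hA_decomp i]; ring
      _ = (sg*b)^(d'+2) * (∑ i, (Z - (q:ℝ)*z i))
            + (dd*(sg*b)^(d'+1)) * (∑ i, mz i * (Z - (q:ℝ)*z i))
            + ∑ i, R i * (Z - (q:ℝ)*z i) := by
          rw [Finset.sum_add_distrib, Finset.sum_add_distrib, Finset.mul_sum, Finset.mul_sum]
      _ = dd*(sg*b)^(d'+1) * (sg * Z^2 - (q:ℝ) * ipzz) + ∑ i, R i * (Z - (q:ℝ)*z i) := by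
          rw [hsum0, hsum2]; ring
  -- ipzz expansion
  have hzg : ∀ s, z s = lam * v s + g s := by
    intro s; simp only [hgdef, hrrdef, hwdef]; ring
  have hgb : ∀ s, |g s| ≤ Cg * t^2 := by
    intro s
    calc |g s| ≤ |lam * hv s| + |rr s| := abs_add_le _ _
      _ ≤ lam*(L*t^2) + CR*t^2 := by
          refine add_le_add ?_ (hrrb s)
          rw [abs_mul, abs_of_nonneg hlampos.le]
          exact mul_le_mul_of_nonneg_left (hhb s) hlampos.le
      _ = Cg*t^2 := by rw [hCg]; ring
  have hmvz2 : ∀ i, mz i = lam * M.mulVec v i + M.mulVec g i := by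
    intro i
    rw [hmzdef]
    calc M.mulVec z i = ∑ s, M i s * z s := mulVec_apply' M z i
      _ = ∑ s, (lam * (M i s * v s) + M i s * g s) := by
          refine Finset.sum_congr rfl fun s _ => ?_
          rw [hzg s]; ring
      _ = lam * ∑ s, M i s * v s + ∑ s, M i s * g s := by
          rw [Finset.sum_add_distrib, Finset.mul_sum]
      _ = lam * M.mulVec v i + M.mulVec g i := by
          rw [mulVec_apply' M v i, mulVec_apply' M g i]
  set ipvg : ℝ := ∑ i, M.mulVec v i * g i with hipvgdef
  set ipgv : ℝ := ∑ i, M.mulVec g i * v i with hipgvdef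
  set ipgg : ℝ := ∑ i, M.mulVec g i * g i with hipggdef
  have hipzz_expand : ipzz = lam^2 * ipvv + (lam * ipvg + lam * ipgv + ipgg) := by
    rw [hipzzdef, hipvvdef, hipvgdef, hipgvdef, hipggdef]
    calc ∑ i, mz i * z i
        = ∑ i, (lam^2 * (M.mulVec v i * v i) + (lam * (M.mulVec v i * g i)
            + lam * (M.mulVec g i * v i) + M.mulVec g i * g i)) := by
          refine Finset.sum_congr rfl fun i _ => ?_
          rw [hmvz2 i, hzg i]; ring
      _ = lam^2 * (∑ i, M.mulVec v i * v i) + (lam * (∑ i, M.mulVec v i * g i)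
            + lam * (∑ i, M.mulVec g i * v i) + ∑ i, M.mulVec g i * g i) := by
          rw [Finset.sum_add_distrib, Finset.sum_add_distrib, Finset.sum_add_distrib,
            Finset.mul_sum, Finset.mul_sum, Finset.mul_sum]
  have ht43 : t^4 ≤ t^3 := pow_le_pow_of_le_one ht0 ht1' (by norm_num)
  have hipvgb : |ipvg| ≤ (q:ℝ) * (sg * t * (Cg*t^2)) :=
    ip_bound M sg t (Cg*t^2) Mnn hrow (by positivity) v g hvt hgb
  have hipgvb : |ipgv| ≤ (q:ℝ) * (sg * (Cg*t^2) * t) :=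
    ip_bound M sg (Cg*t^2) t Mnn hrow (by positivity) g v hgb hvt
  have hipggb : |ipgg| ≤ (q:ℝ) * (sg * (Cg*t^2) * (Cg*t^2)) :=
    ip_bound M sg (Cg*t^2) (Cg*t^2) Mnn hrow (by positivity) g g hgb hgb
  have hipzzb : |ipzz - lam^2*ipvv| ≤ C2 * t^3 := by
    have heq2 : ipzz - lam^2*ipvv = lam*ipvg + lam*ipgv + ipgg := by
      rw [hipzz_expand]; ring
    rw [heq2]
    calc |lam*ipvg + lam*ipgv + ipgg|
        ≤ |lam*ipvg + lam*ipgv| + |ipgg| := abs_add_le _ _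
      _ ≤ |lam*ipvg| + |lam*ipgv| + |ipgg| := by
          have := abs_add_le (lam*ipvg) (lam*ipgv); linarith
      _ = lam*|ipvg| + lam*|ipgv| + |ipgg| := by
          rw [abs_mul lam ipvg, abs_mul lam ipgv, abs_of_nonneg hlampos.le]
      _ ≤ lam*((q:ℝ) * (sg * t * (Cg*t^2))) + lam*((q:ℝ) * (sg * (Cg*t^2) * t))
            + (q:ℝ) * (sg * (Cg*t^2) * (Cg*t^2)) := by
          have h1 := mul_le_mul_of_nonneg_left hipvgb hlampos.le
          have h2 := mul_le_mul_of_nonneg_left hipgvb hlampos.le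
          linarith
      _ = (q:ℝ)*sg*(2*lam*Cg)*t^3 + (q:ℝ)*sg*Cg^2*t^4 := by ring
      _ ≤ (q:ℝ)*sg*(2*lam*Cg)*t^3 + (q:ℝ)*sg*Cg^2*t^3 := by
          have := mul_le_mul_of_nonneg_left ht43
            (show (0:ℝ) ≤ (q:ℝ)*sg*Cg^2 by positivity)
          linarith
      _ = C2 * t^3 := by rw [hC2]; ring
  -- error assembly
  have hZ2b : Z^2 ≤ (q:ℝ)^2*CR^2*t^3 := by
    calc Z^2 = |Z|^2 := (sq_abs _).symm
      _ ≤ ((q:ℝ) * CR * t^2)^2 := pow_le_pow_left₀ (abs_nonneg _) hZb 2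
      _ = (q:ℝ)^2*CR^2*t^4 := by ring
      _ ≤ (q:ℝ)^2*CR^2*t^3 := by
          have := mul_le_mul_of_nonneg_left ht43
            (show (0:ℝ) ≤ (q:ℝ)^2*CR^2 by positivity)
          linarith
  have hRsumb : |∑ i, R i * (Z - (q:ℝ)*z i)| ≤ (q:ℝ)^2*CRR*(CR+C1)*t^3 := by
    calc |∑ i, R i * (Z - (q:ℝ)*z i)| ≤ ∑ i, |R i * (Z - (q:ℝ)*z i)| :=
          Finset.abs_sum_le_sum_abs _ _
      _ ≤ ∑ _i : Fin q, (q:ℝ)*CRR*(CR+C1)*t^3 := by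
          refine Finset.sum_le_sum fun i _ => ?_
          rw [abs_mul]
          have hZq : |Z - (q:ℝ)*z i| ≤ (q:ℝ)*CR*t^2 + (q:ℝ)*(C1*t) := by
            calc |Z - (q:ℝ)*z i| ≤ |Z| + |(q:ℝ)*z i| := abs_sub _ _
              _ ≤ (q:ℝ)*CR*t^2 + (q:ℝ)*(C1*t) := by
                  refine add_le_add hZb ?_
                  rw [abs_mul, abs_of_nonneg hq0.le]
                  exact mul_le_mul_of_nonneg_left (hzb i) hq0.le
          calc |R i| * |Z - (q:ℝ)*z i| ≤ (CRR*t^2) * ((q:ℝ)*CR*t^2 + (q:ℝ)*(C1*t)) := by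
                refine mul_le_mul (hRb i) hZq (abs_nonneg _) (by positivity)
            _ = (q:ℝ)*CRR*CR*t^4 + (q:ℝ)*CRR*C1*t^3 := by ring
            _ ≤ (q:ℝ)*CRR*CR*t^3 + (q:ℝ)*CRR*C1*t^3 := by
                have := mul_le_mul_of_nonneg_left ht43
                  (show (0:ℝ) ≤ (q:ℝ)*CRR*CR by positivity)
                linarith
            _ = (q:ℝ)*CRR*(CR+C1)*t^3 := by ring
      _ = (q:ℝ)^2*CRR*(CR+C1)*t^3 := by
          rw [Finset.sum_const, hcard, nsmul_eq_mul]; ring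
  have hErr : |Sig + K * ipvv| ≤ Ce * t^3 := by
    have hSig3 : Sig + K*ipvv = dd*(sg*b)^(d'+1)*sg*Z^2
        - ((q:ℝ)*dd*(sg*b)^(d'+1))*(ipzz - lam^2*ipvv)
        + ∑ i, R i*(Z - (q:ℝ)*z i) := by
      rw [hSig2, hK]; ring
    rw [hSig3]
    have hT1 : |dd*(sg*b)^(d'+1)*sg*Z^2| ≤ dd*(sg*b)^(d'+1)*sg*((q:ℝ)^2*CR^2*t^3) := by
      rw [abs_mul, abs_of_nonneg (show (0:ℝ) ≤ dd*(sg*b)^(d'+1)*sg by positivity)]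
      rw [abs_of_nonneg (sq_nonneg Z)]
      exact mul_le_mul_of_nonneg_left hZ2b (by positivity)
    have hT2 : |((q:ℝ)*dd*(sg*b)^(d'+1))*(ipzz - lam^2*ipvv)|
        ≤ ((q:ℝ)*dd*(sg*b)^(d'+1))*(C2*t^3) := by
      rw [abs_mul, abs_of_nonneg (show (0:ℝ) ≤ (q:ℝ)*dd*(sg*b)^(d'+1) by positivity)]
      exact mul_le_mul_of_nonneg_left hipzzb (by positivity)
    calc |dd*(sg*b)^(d'+1)*sg*Z^2 - ((q:ℝ)*dd*(sg*b)^(d'+1))*(ipzz - lam^2*ipvv)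
          + ∑ i, R i*(Z - (q:ℝ)*z i)|
        ≤ |dd*(sg*b)^(d'+1)*sg*Z^2 - ((q:ℝ)*dd*(sg*b)^(d'+1))*(ipzz - lam^2*ipvv)|
          + |∑ i, R i*(Z - (q:ℝ)*z i)| := abs_add_le _ _
      _ ≤ |dd*(sg*b)^(d'+1)*sg*Z^2| + |((q:ℝ)*dd*(sg*b)^(d'+1))*(ipzz - lam^2*ipvv)|
          + |∑ i, R i*(Z - (q:ℝ)*z i)| := by
          have := abs_sub (dd*(sg*b)^(d'+1)*sg*Z^2)
            (((q:ℝ)*dd*(sg*b)^(d'+1))*(ipzz - lam^2*ipvv))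
          linarith
      _ ≤ dd*(sg*b)^(d'+1)*sg*((q:ℝ)^2*CR^2*t^3) + ((q:ℝ)*dd*(sg*b)^(d'+1))*(C2*t^3)
          + (q:ℝ)^2*CRR*(CR+C1)*t^3 := by linarith [hRsumb]
      _ = Ce * t^3 := by rw [hCe]; ring
  have hKc : 0 < K*c := mul_pos hKpos hc
  have hKip : K*(c*t^2) ≤ |K*ipvv| := by
    rw [abs_mul, abs_of_nonneg hKpos.le]
    exact mul_le_mul_of_nonneg_left hdefv hKpos.le
  have hSigLB : (K*c/2)*t^2 ≤ |Sig| := by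
    have h2 : |K*ipvv| ≤ |Sig| + |Sig + K*ipvv| := by
      have h2a := abs_sub (Sig + K*ipvv) Sig
      have h2b : Sig + K*ipvv - Sig = K*ipvv := by ring
      rw [h2b] at h2a
      linarith
    have hCet : Ce * t^3 ≤ (K*c/2)*t^2 := by
      have hstep : Ce * t ≤ K*c/2 := by
        calc Ce * t ≤ Ce * (K*c/(2*Ce+1)) := mul_le_mul_of_nonneg_left htK hCepos.le
          _ = Ce*(K*c)/(2*Ce+1) := by ring
          _ ≤ K*c/2 := by
              rw [div_le_div_iff₀ (by positivity) (by norm_num : (0:ℝ) < 2)]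
              linarith [hKc]
      calc Ce * t^3 = (Ce*t)*t^2 := by ring
        _ ≤ (K*c/2)*t^2 := mul_le_mul_of_nonneg_right hstep (by positivity)
    have h5 : K*(c*t^2) ≤ |Sig| + (K*c/2)*t^2 := by
      calc K*(c*t^2) ≤ |K*ipvv| := hKip
        _ ≤ |Sig| + |Sig + K*ipvv| := h2
        _ ≤ |Sig| + Ce*t^3 := by linarith [hErr]
        _ ≤ |Sig| + (K*c/2)*t^2 := by linarith [hCet]
    have h6 : K*(c*t^2) = 2*((K*c/2)*t^2) := by ring
    have h7 : K*c/2*t^2 = (K*c/2)*t^2 := by ring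
    linarith [h5, h6]
  -- choose j
  have havg : ∃ j : Fin q, |Sig|/(q:ℝ) ≤ |F j| := by
    have hsum3 : ∑ _j : Fin q, |Sig|/(q:ℝ) ≤ ∑ j, |F j| := by
      calc ∑ _j : Fin q, |Sig|/(q:ℝ) = (q:ℝ) * (|Sig|/(q:ℝ)) := by
            rw [Finset.sum_const, hcard, nsmul_eq_mul]
        _ = |Sig| := by field_simp
        _ = |∑ j, F j| := by rw [hSigdef]
        _ ≤ ∑ j, |F j| := Finset.abs_sum_le_sum_abs _ _
    obtain ⟨j, _, hj⟩ := Finset.exists_le_of_sum_le ⟨(0 : Fin q), Finset.mem_univ _⟩ hsum3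
    exact ⟨j, hj⟩
  obtain ⟨j, hj⟩ := havg
  refine ⟨j, ?_⟩
  have hgoal : K*c/(2*(q:ℝ)) * t^2 ≤ |F j| := by
    have h4 : ((K*c/2)*t^2)/(q:ℝ) ≤ |Sig|/(q:ℝ) := by
      exact div_le_div_of_nonneg_right hSigLB hq0.le
    calc K*c/(2*(q:ℝ)) * t^2 = ((K*c/2)*t^2)/(q:ℝ) := by ring
      _ ≤ |Sig|/(q:ℝ) := h4
      _ ≤ |F j| := hj
  exact hgoal

theorem stmt9 (Q : ℤ → ℝ) (hpos : ∀ n : ℤ, 0 < Q n) (hsymm : ∀ n : ℤ, Q (-n) = Q n)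
    (hsum : Summable Q) (d q : ℕ) (hd : 2 ≤ d) (hq : 2 ≤ q)
    (c : ℝ) (hc : 0 < c) (E : Submodule ℝ (Fin q → ℝ))
    (hE : ∀ v ∈ E, ∑ i, v i = 0)
    (hdef : (∀ v ∈ E, c * twoNorm v ^ 2 ≤ ∑ i, (fuzzyOp Q q).mulVec v i * v i) ∨
            (∀ v ∈ E, ∑ i, (fuzzyOp Q q).mulVec v i * v i ≤ -(c * twoNorm v ^ 2)))
    (V : Set E) (hVopen : IsOpen V) (hV0 : (0 : E) ∈ V)
    (h : E → (Fin q → ℝ)) (hsmooth : ContDiffOn ℝ (⊤ : ℕ∞) h V)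
    (hh0 : h 0 = 0) (hdh0 : fderiv ℝ h 0 = 0)
    (hhsum : ∀ v ∈ V, ∑ i, h v i = 0)
    (hhorth : ∀ v ∈ V, ∀ w ∈ E, ∑ i, h v i * w i = 0) :
    ∃ C > (0 : ℝ), ∃ V' : Set E, V' ⊆ V ∧ IsOpen V' ∧ (0 : E) ∈ V' ∧
      ∀ v ∈ V', ∃ j : Fin q,
        C * twoNorm (v : Fin q → ℝ) ^ 2 ≤
          |∑ i, ((fuzzyOp Q q).mulVec
                (fun r => (1 / (q : ℝ) + (v : Fin q → ℝ) r + h v r) ^ d) i) ^ d *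
              ((1 / (q : ℝ) + (v : Fin q → ℝ) (i + j) + h v (i + j)) ^ d
                - (1 / (q : ℝ) + (v : Fin q → ℝ) i + h v i) ^ d)| := by
  haveI : NeZero q := ⟨by omega⟩
  have hq0 : (0:ℝ) < q := by positivity
  set M := fuzzyOp Q q with hM
  set sg : ℝ := ∑ s, fuzzyOp Q q 0 s with hsg
  have Mnn : ∀ r s, 0 ≤ M r s := fuzzyOp_nonneg Q q hpos
  have hsgpos : 0 < sg := by
    rw [hsg]
    exact lt_of_lt_of_le (fuzzyOp_diag_pos Q q hpos hsum)
      (Finset.single_le_sum (fun s _ => fuzzyOp_nonneg Q q hpos 0 s) (Finset.mem_univ 0))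
  have hrow : ∀ r : Fin q, ∑ s, M r s = sg := fun r => fuzzyOp_rowsum Q q r
  have hcol : ∀ s : Fin q, ∑ r, M r s = sg := fun s => fuzzyOp_colsum Q q s
  -- quadratic bound for h near 0
  obtain ⟨L, ε, hLnn, hεpos, hεV, hhb⟩ :
      ∃ L ε : ℝ, 0 ≤ L ∧ 0 < ε ∧ (∀ x : E, ‖x‖ < ε → x ∈ V) ∧
        ∀ x : E, ‖x‖ < ε → ‖h x‖ ≤ L * ‖x‖^2 := by
    have hca : ContDiffAt ℝ (⊤ : ℕ∞) h 0 := hsmooth.contDiffAt (hVopen.mem_nhds hV0)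
    have hca2 : ContDiffAt ℝ 2 h 0 := hca.of_le (WithTop.coe_le_coe.mpr (le_top : (2:ℕ∞) ≤ ⊤))
    have hca1 : ContDiffAt ℝ 1 (fderiv ℝ h) 0 := hca2.fderiv_right (by norm_num)
    obtain ⟨K, s, hs, hlip⟩ := hca1.exists_lipschitzOnWith
    obtain ⟨ε, hεpos, hball⟩ := Metric.mem_nhds_iff.mp (Filter.inter_mem hs (hVopen.mem_nhds hV0))
    refine ⟨K, ε, K.coe_nonneg, hεpos, ?_, ?_⟩
    · intro x hx
      exact (hball (by simpa [Metric.mem_ball, dist_zero_right] using hx)).2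
    · intro x hx
      have hder : ∀ y : E, ‖y‖ < ε → ‖fderiv ℝ h y‖ ≤ K * ‖y‖ := by
        intro y hy
        have hy1 : y ∈ s :=
          (hball (by simpa [Metric.mem_ball, dist_zero_right] using hy)).1
        have h01 : (0 : E) ∈ s :=
          (hball (by simpa [Metric.mem_ball, dist_zero_right] using hεpos)).1
        have := hlip.dist_le_mul y hy1 0 h01
        have e : dist (fderiv ℝ h y) (fderiv ℝ h 0) = ‖fderiv ℝ h y‖ := by
          rw [hdh0]; exact dist_zero_right (fderiv ℝ h y)
        rw [e, dist_zero_right] at this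
        exact this
      have hdiff : ∀ y : E, y ∈ Metric.closedBall (0:E) ‖x‖ → DifferentiableAt ℝ h y := by
        intro y hy
        have hyx : ‖y‖ ≤ ‖x‖ := by simpa [Metric.mem_closedBall, dist_zero_right] using hy
        have hyV : y ∈ V :=
          (hball (by simpa [Metric.mem_ball, dist_zero_right] using lt_of_le_of_lt hyx hx)).2
        exact (hsmooth.contDiffAt (hVopen.mem_nhds hyV)).differentiableAt (by simp)
      have hbound : ∀ y : E, y ∈ Metric.closedBall (0:E) ‖x‖ →
          ‖fderiv ℝ h y‖ ≤ (K : ℝ) * ‖x‖ := by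
        intro y hy
        have hyx : ‖y‖ ≤ ‖x‖ := by simpa [Metric.mem_closedBall, dist_zero_right] using hy
        exact le_trans (hder y (lt_of_le_of_lt hyx hx))
          (mul_le_mul_of_nonneg_left hyx K.coe_nonneg)
      have hmv := (convex_closedBall (0:E) ‖x‖).norm_image_sub_le_of_norm_fderiv_le
        hdiff hbound (show (0:E) ∈ Metric.closedBall (0:E) ‖x‖ by
          simp [Metric.mem_closedBall, norm_nonneg])
        (show x ∈ Metric.closedBall (0:E) ‖x‖ by
          simp [Metric.mem_closedBall, dist_zero_right])
      rw [hh0, sub_zero, sub_zero] at hmv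
      calc ‖h x‖ ≤ (K : ℝ) * ‖x‖ * ‖x‖ := hmv
        _ = (K : ℝ) * ‖x‖^2 := by ring
  obtain ⟨δ, hδpos, Cs, hCspos, hcore⟩ := core q d hq hd M sg c L Mnn hsgpos hrow hcol hc hLnn
  -- the neighborhood
  set ε' : ℝ := min ε (δ/q) with hε'
  have hε'pos : 0 < ε' := lt_min hεpos (by positivity)
  refine ⟨Cs, hCspos, V ∩ Metric.ball 0 ε', fun x hx => hx.1,
    hVopen.inter Metric.isOpen_ball, ⟨hV0, by simpa [Metric.mem_ball] using hε'pos⟩, ?_⟩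
  intro v hv
  have hvV : (v : E) ∈ V := hv.1
  have hvball : ‖v‖ < ε' := by simpa [Metric.mem_ball, dist_zero_right] using hv.2
  set t : ℝ := twoNorm (v : Fin q → ℝ) with htdef
  have ht0 : 0 ≤ t := Real.sqrt_nonneg _
  have ht2 : t^2 = ∑ i, (v : Fin q → ℝ) i ^ 2 := Real.sq_sqrt (by positivity)
  have hvt : ∀ i, |(v : Fin q → ℝ) i| ≤ t := by
    intro i
    rw [htdef, twoNorm, ← Real.sqrt_sq_eq_abs]
    exact Real.sqrt_le_sqrt (Finset.single_le_sum
      (f := fun i => (v : Fin q → ℝ) i ^ 2) (fun i _ => sq_nonneg _) (Finset.mem_univ i))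
  have hnormv : ‖(v : E)‖ < ε := lt_of_lt_of_le hvball (min_le_left _ _)
  have hnorm_coe : ‖(v : E)‖ = ‖(v : Fin q → ℝ)‖ := rfl
  have hnt : ‖(v : E)‖ ≤ t := by
    rw [hnorm_coe]
    exact pi_norm_le_iff_of_nonneg ht0 |>.mpr fun i => by
      rw [Real.norm_eq_abs]; exact hvt i
  have htδ : t ≤ δ := by
    have h1 : t^2 ≤ (q:ℝ) * ‖(v:E)‖^2 := by
      rw [ht2, hnorm_coe]
      calc ∑ i, (v : Fin q → ℝ) i ^ 2 ≤ ∑ _i : Fin q, ‖(v : Fin q → ℝ)‖^2 := by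
            refine Finset.sum_le_sum fun i _ => ?_
            have hni := norm_le_pi_norm (v : Fin q → ℝ) i
            calc (v : Fin q → ℝ) i ^ 2 = ‖(v : Fin q → ℝ) i‖^2 := by
                  rw [Real.norm_eq_abs, sq_abs]
              _ ≤ ‖(v : Fin q → ℝ)‖^2 := pow_le_pow_left₀ (norm_nonneg _) hni 2
        _ = (q:ℝ) * ‖(v : Fin q → ℝ)‖^2 := by
            rw [Finset.sum_const]
            simp [nsmul_eq_mul]
    have h2 : ‖(v:E)‖ < δ/q := lt_of_lt_of_le hvball (min_le_right _ _)
    have h4 : t ≤ (q:ℝ) * ‖(v:E)‖ := by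
      have hq1' : (1:ℝ) ≤ q := by exact_mod_cast (by omega : 1 ≤ q)
      have hqsq : (q:ℝ) ≤ (q:ℝ)^2 := by nlinarith [hq1', hq0]
      have h3 : t^2 ≤ ((q:ℝ)*‖(v:E)‖)^2 := by
        calc t^2 ≤ (q:ℝ) * ‖(v:E)‖^2 := h1
          _ ≤ (q:ℝ)^2 * ‖(v:E)‖^2 :=
              mul_le_mul_of_nonneg_right hqsq (sq_nonneg _)
          _ = ((q:ℝ)*‖(v:E)‖)^2 := by ring
      calc t = Real.sqrt (t^2) := (Real.sqrt_sq ht0).symm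
        _ ≤ Real.sqrt (((q:ℝ)*‖(v:E)‖)^2) := Real.sqrt_le_sqrt h3
        _ = (q:ℝ)*‖(v:E)‖ := Real.sqrt_sq (by positivity)
    calc t ≤ (q:ℝ) * ‖(v:E)‖ := h4
      _ ≤ (q:ℝ) * (δ/q) := mul_le_mul_of_nonneg_left h2.le hq0.le
      _ = δ := by field_simp
  have hhvsum : ∑ i, h v i = 0 := hhsum v hvV
  have hvsum0 : ∑ i, (v : Fin q → ℝ) i = 0 := hE v v.2
  have hhbv : ∀ i, |h v i| ≤ L * t^2 := by
    intro i
    have h5 : ‖h v‖ ≤ L * ‖(v:E)‖^2 := hhb v hnormv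
    have h6 : |h v i| ≤ ‖h v‖ := by
      have := norm_le_pi_norm (h v) i
      rwa [Real.norm_eq_abs] at this
    have h7 : L * ‖(v:E)‖^2 ≤ L * t^2 :=
      mul_le_mul_of_nonneg_left (pow_le_pow_left₀ (norm_nonneg _) hnt 2) hLnn
    linarith
  have hdefv : c * t^2 ≤ |∑ i, M.mulVec (v : Fin q → ℝ) i * (v : Fin q → ℝ) i| := by
    have ht2' : c * t^2 = c * twoNorm (v : Fin q → ℝ)^2 := by rw [htdef]
    rcases hdef with hd1 | hd2
    · exact ht2' ▸ le_trans (hd1 v v.2) (le_abs_self _)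
    · have hle := hd2 v v.2
      rw [ht2']
      calc c * twoNorm (v : Fin q → ℝ)^2
          ≤ -(∑ i, M.mulVec (v : Fin q → ℝ) i * (v : Fin q → ℝ) i) := by linarith
        _ ≤ |∑ i, M.mulVec (v : Fin q → ℝ) i * (v : Fin q → ℝ) i| := neg_le_abs _
  obtain ⟨j, hj⟩ := hcore (v : Fin q → ℝ) (h v) t ht0 htδ hvt hvsum0 hhvsum hhbv hdefv
  exact ⟨j, hj⟩
end

section
/- Let α > 0, K > 0, M ≥ 0, and let U : ℤ → ℝ be symmetric (U(−j) = U(j)) with U(j) ≥ −M for all j and U(j)/|j|^α → K as |j| → ∞. Fix an integer q ≥ 2. Then for every β > 0 the sums ∑_{j∈ℤ} exp(−β·U(|a+qj|)) are finite for each a ∈ {0,…,q−1}, and lim_{β↓0} max_{0≤a≤q−1} | log( ∑_{j∈ℤ} exp(−β·U(|a+qj|)) ) − log( ∑_{j∈ℤ} exp(−β·U(|qj|)) ) | = 0. -/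
/-!
For `j = n` and `j = -(n + 1)` the integer `|a + q j|` lies in `[q n, q (n + 1)]`, so the
residue sum `Q_a(β) = residueSum U q β a = ∑ⱼ exp (-β U |a + q j|)` is squeezed between
multiples of `∑ₙ exp (-β c (q n) ^ α)` for constants `c` slightly below and slightly above `K`; the potential
stays within a bounded error of `c |m| ^ α` because `U m / |m| ^ α → K`. The integral test, with
`∫₀^∞ exp (-s x ^ α) dx = s ^ (-1 / α) Γ (1 / α + 1)`, turns this into
`β ^ (1 / α) Q_a(β) → 2 (K q ^ α) ^ (-1 / α) Γ (1 / α + 1)` as `β ↓ 0`. The limit does not depend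
on `a`, so `log Q_a - log Q_0 → 0` for every residue, hence so does their maximum.
-/

open Real Filter Topology Set

section ExpRpowSum

variable {α β s : ℝ}

lemma antitoneOn_exp_neg_mul_rpow (hα : 0 ≤ α) (hs : 0 ≤ s) :
    AntitoneOn (fun x : ℝ => exp (-s * x ^ α)) (Ici 0) := by
  intro x hx y _ hxy
  have : x ^ α ≤ y ^ α := rpow_le_rpow hx hxy hα
  exact exp_le_exp.2 (mul_le_mul_of_nonpos_left this (neg_nonpos.2 hs))

lemma integrableOn_exp_neg_mul_rpow (hα : 0 < α) (hs : 0 < s) :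
    MeasureTheory.IntegrableOn (fun x : ℝ => exp (-s * x ^ α)) (Ioi 0) := by
  simpa using integrableOn_rpow_mul_exp_neg_mul_rpow (s := 0) neg_one_lt_zero hα hs

lemma summable_exp_neg_mul_rpow (hα : 0 < α) (hs : 0 < s) :
    Summable fun n : ℕ => exp (-s * (n : ℝ) ^ α) :=
  (antitoneOn_exp_neg_mul_rpow hα.le hs.le).summable_of_integrableOn_Ioi_zero
    (integrableOn_exp_neg_mul_rpow hα hs) fun _ _ => (exp_pos _).le

lemma tsum_exp_neg_mul_rpow_le (hα : 0 < α) (hs : 0 < s) :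
    ∑' n : ℕ, exp (-s * (n : ℝ) ^ α) ≤ 1 + s ^ (-1 / α) * Gamma (1 / α + 1) := by
  have h := (antitoneOn_exp_neg_mul_rpow hα.le hs.le).tsum_le_integral
    (integrableOn_exp_neg_mul_rpow hα hs) fun _ _ => (exp_pos _).le
  rwa [integral_exp_neg_mul_rpow hα hs, zero_rpow hα.ne', mul_zero, exp_zero] at h

lemma le_tsum_exp_neg_mul_rpow (hα : 0 < α) (hs : 0 < s) :
    s ^ (-1 / α) * Gamma (1 / α + 1) ≤ ∑' n : ℕ, exp (-s * (n : ℝ) ^ α) := by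
  rw [← integral_exp_neg_mul_rpow hα hs]
  exact (antitoneOn_exp_neg_mul_rpow hα.le hs.le).integral_le_tsum
    (summable_exp_neg_mul_rpow hα hs) fun _ _ => (exp_pos _).le

lemma le_tsum_exp_neg_mul_rpow_add_one (hα : 0 < α) (hs : 0 < s) :
    s ^ (-1 / α) * Gamma (1 / α + 1) - 1 ≤ ∑' n : ℕ, exp (-s * ((n : ℝ) + 1) ^ α) := by
  have h := (summable_exp_neg_mul_rpow hα hs).tsum_eq_zero_add
  push_cast at h
  rw [zero_rpow hα.ne', mul_zero, exp_zero] at h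
  linarith [le_tsum_exp_neg_mul_rpow hα hs]

lemma rpow_mul_tsum_exp_neg_mul_rpow_le (hα : 0 < α) (hβ : 0 < β) (hs : 0 < s) :
    β ^ (1 / α) * ∑' n : ℕ, exp (-(β * s) * (n : ℝ) ^ α)
      ≤ β ^ (1 / α) + s ^ (-1 / α) * Gamma (1 / α + 1) := by
  have h := mul_le_mul_of_nonneg_left (tsum_exp_neg_mul_rpow_le hα (mul_pos hβ hs))
    (rpow_nonneg hβ.le (1 / α))
  rwa [mul_add, mul_one, ← mul_assoc, mul_rpow hβ.le hs.le, ← mul_assoc, ← rpow_add hβ,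
    show 1 / α + -1 / α = 0 by ring, rpow_zero, one_mul] at h

lemma le_rpow_mul_tsum_exp_neg_mul_rpow_add_one (hα : 0 < α) (hβ : 0 < β) (hs : 0 < s) :
    s ^ (-1 / α) * Gamma (1 / α + 1) - β ^ (1 / α)
      ≤ β ^ (1 / α) * ∑' n : ℕ, exp (-(β * s) * ((n : ℝ) + 1) ^ α) := by
  have h := mul_le_mul_of_nonneg_left
    (le_tsum_exp_neg_mul_rpow_add_one hα (mul_pos hβ hs)) (rpow_nonneg hβ.le (1 / α))
  rwa [mul_sub, mul_one, ← mul_assoc, mul_rpow hβ.le hs.le, ← mul_assoc, ← rpow_add hβ,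
    show 1 / α + -1 / α = 0 by ring, rpow_zero, one_mul] at h

end ExpRpowSum

section Residues

variable {q : ℕ} {a : ℤ}

lemma abs_add_mul_natCast_mem_Icc (ha0 : 0 ≤ a) (haq : a < q) (n : ℕ) :
    |a + q * n| ∈ Icc ((q : ℤ) * n) (q * (n + 1)) := by
  rw [abs_of_nonneg (by positivity)]
  constructor <;> nlinarith

lemma abs_add_mul_neg_mem_Icc (ha0 : 0 ≤ a) (haq : a < q) (n : ℕ) :
    |a + q * (-(n + 1))| ∈ Icc ((q : ℤ) * n) (q * (n + 1)) := by
  rw [abs_of_nonpos (by nlinarith)]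
  constructor <;> nlinarith

variable {g : ℤ → ℝ} {h : ℕ → ℝ}

lemma summable_residue_and_tsum_le (ha0 : 0 ≤ a) (haq : a < q) (hg : ∀ m, 0 ≤ g m)
    (hh : Summable h) (hgh : ∀ n : ℕ, ∀ m ∈ Icc ((q : ℤ) * n) (q * (n + 1)), g m ≤ h n) :
    (Summable fun j : ℤ => g |a + q * j|) ∧ ∑' j : ℤ, g |a + q * j| ≤ 2 * ∑' n, h n := by
  have hpos n := hgh n _ (abs_add_mul_natCast_mem_Icc ha0 haq n)
  have hneg n := hgh n _ (abs_add_mul_neg_mem_Icc ha0 haq n)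
  have spos := Summable.of_nonneg_of_le (fun _ => hg _) hpos hh
  have sneg := Summable.of_nonneg_of_le (fun _ => hg _) hneg hh
  refine ⟨Summable.of_nat_of_neg_add_one (f := fun j : ℤ => g |a + q * j|) spos sneg, ?_⟩
  rw [tsum_of_nat_of_neg_add_one (f := fun j : ℤ => g |a + q * j|) spos sneg, two_mul]
  exact add_le_add (spos.tsum_le_tsum hpos hh) (sneg.tsum_le_tsum hneg hh)

lemma two_mul_tsum_le_residue (ha0 : 0 ≤ a) (haq : a < q)
    (hs : Summable fun j : ℤ => g |a + q * j|) (hh : Summable h)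
    (hhg : ∀ n : ℕ, ∀ m ∈ Icc ((q : ℤ) * n) (q * (n + 1)), h n ≤ g m) :
    2 * ∑' n, h n ≤ ∑' j : ℤ, g |a + q * j| := by
  have spos : Summable fun n : ℕ => g |a + q * n| := hs.comp_injective Nat.cast_injective
  have sneg : Summable fun n : ℕ => g |a + q * (-(n + 1))| :=
    hs.comp_injective @Int.negSucc.inj
  have hpos n := hhg n _ (abs_add_mul_natCast_mem_Icc ha0 haq n)
  have hneg n := hhg n _ (abs_add_mul_neg_mem_Icc ha0 haq n)
  rw [tsum_of_nat_of_neg_add_one (f := fun j : ℤ => g |a + q * j|) spos sneg, two_mul]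
  exact add_le_add (hh.tsum_le_tsum hpos spos) (hh.tsum_le_tsum hneg sneg)

end Residues

section PotentialBounds

variable {α K c : ℝ} {U : ℤ → ℝ}

lemma exists_mul_rpow_sub_le (hU : Tendsto (fun j : ℤ => U j / |(j : ℝ)| ^ α) cofinite (𝓝 K))
    (hc : c < K) : ∃ D, ∀ j : ℤ, c * |(j : ℝ)| ^ α - D ≤ U j := by
  have hev : ∀ᶠ j : ℤ in cofinite, c * |(j : ℝ)| ^ α - U j ≤ 0 := by
    filter_upwards [hU.eventually (lt_mem_nhds hc), eventually_cofinite_ne 0] with j hj hj0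
    rw [lt_div_iff₀ (rpow_pos_of_pos (by positivity) _)] at hj
    linarith
  obtain ⟨D, hD⟩ := (isBoundedUnder_of_eventually_le hev).bddAbove_range_of_cofinite
  exact ⟨D, fun j => by linarith [hD ⟨j, rfl⟩]⟩

lemma exists_le_mul_rpow_add (hU : Tendsto (fun j : ℤ => U j / |(j : ℝ)| ^ α) cofinite (𝓝 K))
    (hc : K < c) : ∃ D, ∀ j : ℤ, U j ≤ c * |(j : ℝ)| ^ α + D := by
  have hev : ∀ᶠ j : ℤ in cofinite, U j - c * |(j : ℝ)| ^ α ≤ 0 := by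
    filter_upwards [hU.eventually (gt_mem_nhds hc), eventually_cofinite_ne 0] with j hj hj0
    rw [div_lt_iff₀ (rpow_pos_of_pos (by positivity) _)] at hj
    linarith
  obtain ⟨D, hD⟩ := (isBoundedUnder_of_eventually_le hev).bddAbove_range_of_cofinite
  exact ⟨D, fun j => by linarith [hD ⟨j, rfl⟩]⟩

end PotentialBounds

noncomputable def residueSum (U : ℤ → ℝ) (q : ℕ) (β : ℝ) (a : ℤ) : ℝ :=
  ∑' j : ℤ, exp (-β * U |a + q * j|)

section ResidueSum

variable {α β c D K l : ℝ} {U : ℤ → ℝ} {q : ℕ} {a : ℤ}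

lemma summable_and_rpow_mul_residueSum_le (hα : 0 < α) (hβ : 0 < β) (hc : 0 < c)
    (hD : ∀ j : ℤ, c * |(j : ℝ)| ^ α - D ≤ U j) (ha0 : 0 ≤ a) (haq : a < q) :
    (Summable fun j : ℤ => exp (-β * U |a + q * j|)) ∧
      β ^ (1 / α) * residueSum U q β a
        ≤ 2 * exp (β * D) * (β ^ (1 / α) + (c * q ^ α) ^ (-1 / α) * Gamma (1 / α + 1)) := by
  have hq : (0 : ℝ) < q := by exact_mod_cast (ha0.trans_lt haq)
  have hgh : ∀ n : ℕ, ∀ m ∈ Icc ((q : ℤ) * n) (q * (n + 1)),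
      exp (-β * U m) ≤ exp (β * D) * exp (-(β * (c * q ^ α)) * (n : ℝ) ^ α) := by
    rintro n m ⟨hm, -⟩
    have hm' : (q : ℝ) * n ≤ m := by exact_mod_cast hm
    have hpow : (q : ℝ) ^ α * (n : ℝ) ^ α ≤ |(m : ℝ)| ^ α := by
      have hm₀ : (0 : ℝ) ≤ m := (mul_nonneg hq.le n.cast_nonneg).trans hm'
      rw [← mul_rpow hq.le n.cast_nonneg, abs_of_nonneg hm₀]
      exact rpow_le_rpow (by positivity) hm' hα.le
    have hU : c * ((q : ℝ) ^ α * (n : ℝ) ^ α) - D ≤ U m := by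
      grw [hpow]
      exact hD m
    rw [← exp_add]
    exact exp_le_exp.2 (by linarith [mul_le_mul_of_nonneg_left hU hβ.le])
  obtain ⟨hs, hle⟩ := summable_residue_and_tsum_le ha0 haq (fun _ => (exp_pos _).le)
    ((summable_exp_neg_mul_rpow hα (by positivity : 0 < β * (c * q ^ α))).mul_left _) hgh
  refine ⟨hs, ?_⟩
  rw [tsum_mul_left] at hle
  calc β ^ (1 / α) * residueSum U q β a
      ≤ β ^ (1 / α) * (2 * (exp (β * D) * ∑' n : ℕ, exp (-(β * (c * q ^ α)) * (n : ℝ) ^ α))) :=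
        mul_le_mul_of_nonneg_left hle (by positivity)
    _ = 2 * exp (β * D) * (β ^ (1 / α) * ∑' n : ℕ, exp (-(β * (c * q ^ α)) * (n : ℝ) ^ α)) := by
        ring
    _ ≤ _ := by
        gcongr
        exact rpow_mul_tsum_exp_neg_mul_rpow_le hα hβ (by positivity)

lemma le_rpow_mul_residueSum (hα : 0 < α) (hβ : 0 < β) (hc : 0 < c)
    (hD : ∀ j : ℤ, U j ≤ c * |(j : ℝ)| ^ α + D) (ha0 : 0 ≤ a) (haq : a < q)
    (hs : Summable fun j : ℤ => exp (-β * U |a + q * j|)) :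
    2 * exp (-(β * D)) * ((c * q ^ α) ^ (-1 / α) * Gamma (1 / α + 1) - β ^ (1 / α))
      ≤ β ^ (1 / α) * residueSum U q β a := by
  have hq : (0 : ℝ) < q := by exact_mod_cast (ha0.trans_lt haq)
  have hhg : ∀ n : ℕ, ∀ m ∈ Icc ((q : ℤ) * n) (q * (n + 1)),
      exp (-(β * D)) * exp (-(β * (c * q ^ α)) * ((n : ℝ) + 1) ^ α) ≤ exp (-β * U m) := by
    rintro n m ⟨hm₀, hm⟩
    have hm₀' : (0 : ℝ) ≤ m := by exact_mod_cast (by positivity : (0 : ℤ) ≤ q * n).trans hm₀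
    have hm' : (m : ℝ) ≤ q * ((n : ℝ) + 1) := by exact_mod_cast hm
    have hpow : |(m : ℝ)| ^ α ≤ (q : ℝ) ^ α * ((n : ℝ) + 1) ^ α := by
      rw [← mul_rpow hq.le (by positivity), abs_of_nonneg hm₀']
      exact rpow_le_rpow hm₀' hm' hα.le
    have hU : U m ≤ c * ((q : ℝ) ^ α * ((n : ℝ) + 1) ^ α) + D := by
      grw [← hpow]
      exact hD m
    rw [← exp_add]
    exact exp_le_exp.2 (by linarith [mul_le_mul_of_nonneg_left hU hβ.le])
  have hsum : Summable fun n : ℕ =>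
      exp (-(β * D)) * exp (-(β * (c * q ^ α)) * ((n : ℝ) + 1) ^ α) := by
    refine ((summable_nat_add_iff 1).2
      (summable_exp_neg_mul_rpow hα (by positivity : 0 < β * (c * q ^ α)))).mul_left
      (exp (-(β * D))) |>.congr fun n => by push_cast; rfl
  have hle := two_mul_tsum_le_residue (g := fun m => exp (-β * U m)) ha0 haq hs hsum hhg
  rw [tsum_mul_left] at hle
  calc 2 * exp (-(β * D)) * ((c * q ^ α) ^ (-1 / α) * Gamma (1 / α + 1) - β ^ (1 / α))
      ≤ 2 * exp (-(β * D)) *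
          (β ^ (1 / α) * ∑' n : ℕ, exp (-(β * (c * q ^ α)) * ((n : ℝ) + 1) ^ α)) := by
        gcongr
        exact le_rpow_mul_tsum_exp_neg_mul_rpow_add_one hα hβ (by positivity)
    _ = β ^ (1 / α) *
          (2 * (exp (-(β * D)) * ∑' n : ℕ, exp (-(β * (c * q ^ α)) * ((n : ℝ) + 1) ^ α))) := by
        ring
    _ ≤ β ^ (1 / α) * residueSum U q β a := by
        gcongr
        exact hle

lemma summable_residueSum (hα : 0 < α) (hK : 0 < K)
    (hU : Tendsto (fun j : ℤ => U j / |(j : ℝ)| ^ α) cofinite (𝓝 K)) (hβ : 0 < β)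
    (ha0 : 0 ≤ a) (haq : a < q) :
    Summable fun j : ℤ => exp (-β * U |a + q * j|) := by
  obtain ⟨D, hD⟩ := exists_mul_rpow_sub_le hU (half_lt_self hK)
  exact (summable_and_rpow_mul_residueSum_le hα hβ (half_pos hK) hD ha0 haq).1

lemma eventually_lt_rpow_mul_residueSum (hα : 0 < α) (hK : 0 < K)
    (hU : Tendsto (fun j : ℤ => U j / |(j : ℝ)| ^ α) cofinite (𝓝 K)) (hKc : K < c)
    (ha0 : 0 ≤ a) (haq : a < q) (hl : l < 2 * ((c * q ^ α) ^ (-1 / α) * Gamma (1 / α + 1))) :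
    ∀ᶠ β in 𝓝[>] 0, l < β ^ (1 / α) * residueSum U q β a := by
  obtain ⟨D, hD⟩ := exists_le_mul_rpow_add hU hKc
  have hlim : Tendsto (fun β => 2 * exp (-(β * D)) *
      ((c * q ^ α) ^ (-1 / α) * Gamma (1 / α + 1) - β ^ (1 / α))) (𝓝[>] 0)
      (𝓝 (2 * ((c * q ^ α) ^ (-1 / α) * Gamma (1 / α + 1)))) := by
    have hcont : Continuous fun β : ℝ => 2 * exp (-(β * D)) *
        ((c * q ^ α) ^ (-1 / α) * Gamma (1 / α + 1) - β ^ (1 / α)) := by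
      fun_prop (disch := positivity)
    simpa [zero_rpow, hα.ne'] using (hcont.continuousWithinAt (s := Ioi 0) (x := 0)).tendsto
  filter_upwards [hlim.eventually (lt_mem_nhds hl), self_mem_nhdsWithin] with β hβl hβ
  exact hβl.trans_le (le_rpow_mul_residueSum hα hβ (hK.trans hKc) hD ha0 haq
    (summable_residueSum hα hK hU hβ ha0 haq))

lemma eventually_rpow_mul_residueSum_lt (hα : 0 < α)
    (hU : Tendsto (fun j : ℤ => U j / |(j : ℝ)| ^ α) cofinite (𝓝 K)) (hc : 0 < c) (hcK : c < K)
    (ha0 : 0 ≤ a) (haq : a < q) (hl : 2 * ((c * q ^ α) ^ (-1 / α) * Gamma (1 / α + 1)) < l) :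
    ∀ᶠ β in 𝓝[>] 0, β ^ (1 / α) * residueSum U q β a < l := by
  obtain ⟨D, hD⟩ := exists_mul_rpow_sub_le hU hcK
  have hlim : Tendsto (fun β => 2 * exp (β * D) *
      (β ^ (1 / α) + (c * q ^ α) ^ (-1 / α) * Gamma (1 / α + 1))) (𝓝[>] 0)
      (𝓝 (2 * ((c * q ^ α) ^ (-1 / α) * Gamma (1 / α + 1)))) := by
    have hcont : Continuous fun β : ℝ => 2 * exp (β * D) *
        (β ^ (1 / α) + (c * q ^ α) ^ (-1 / α) * Gamma (1 / α + 1)) := by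
      fun_prop (disch := positivity)
    simpa [zero_rpow, hα.ne'] using (hcont.continuousWithinAt (s := Ioi 0) (x := 0)).tendsto
  filter_upwards [hlim.eventually (gt_mem_nhds hl), self_mem_nhdsWithin] with β hβl hβ
  exact (summable_and_rpow_mul_residueSum_le hα hβ hc hD ha0 haq).2.trans_lt hβl

theorem tendsto_rpow_mul_residueSum (hα : 0 < α) (hK : 0 < K)
    (hU : Tendsto (fun j : ℤ => U j / |(j : ℝ)| ^ α) cofinite (𝓝 K)) (ha0 : 0 ≤ a) (haq : a < q) :
    Tendsto (fun β => β ^ (1 / α) * residueSum U q β a) (𝓝[>] 0)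
      (𝓝 (2 * ((K * q ^ α) ^ (-1 / α) * Gamma (1 / α + 1)))) := by
  have hq : (0 : ℝ) < q := by exact_mod_cast ha0.trans_lt haq
  have hlimit : Tendsto (fun c => 2 * ((c * q ^ α) ^ (-1 / α) * Gamma (1 / α + 1))) (𝓝 K)
      (𝓝 (2 * ((K * q ^ α) ^ (-1 / α) * Gamma (1 / α + 1)))) :=
    (((continuousAt_id.mul_const _).rpow_const (Or.inl (by positivity))).mul_const _).const_mul 2
  refine tendsto_order.2 ⟨fun l hl => ?_, fun u hu => ?_⟩
  · obtain ⟨c, hlc, hKc⟩ := ((hlimit.mono_left nhdsWithin_le_nhds).eventually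
      (lt_mem_nhds hl)).and (self_mem_nhdsWithin (s := Ioi K)) |>.exists
    exact eventually_lt_rpow_mul_residueSum hα hK hU hKc ha0 haq hlc
  · obtain ⟨c, hcu, hc0, hcK⟩ := ((hlimit.mono_left nhdsWithin_le_nhds).eventually
      (gt_mem_nhds hu)).and (Ioo_mem_nhdsLT hK) |>.exists
    exact eventually_rpow_mul_residueSum_lt hα hU hc0 hcK ha0 haq hcu

end ResidueSum

lemma tendsto_log_sub_log_of_tendsto_mul {ι : Type*} {l : Filter ι} {w f g : ι → ℝ} {L : ℝ}
    (hL : L ≠ 0) (hw : ∀ᶠ i in l, w i ≠ 0) (hf : Tendsto (fun i => w i * f i) l (𝓝 L))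
    (hg : Tendsto (fun i => w i * g i) l (𝓝 L)) :
    Tendsto (fun i => log (f i) - log (g i)) l (𝓝 0) := by
  have h := (hf.log hL).sub (hg.log hL)
  rw [sub_self] at h
  refine h.congr' ?_
  filter_upwards [hw, hf.eventually_ne hL, hg.eventually_ne hL] with i hwi hfi hgi
  rw [log_mul hwi (right_ne_zero_of_mul hfi), log_mul hwi (right_ne_zero_of_mul hgi)]
  ring

theorem stmt11 (α K : ℝ) (hα : 0 < α) (hK : 0 < K)
    (U : ℤ → ℝ)
    (hUlim : Filter.Tendsto (fun j : ℤ => U j / (|j| : ℝ) ^ α)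
      Filter.cofinite (nhds K))
    (q : ℕ) (hq : 2 ≤ q) :
    (∀ β : ℝ, 0 < β → ∀ a : ℤ, 0 ≤ a → a ≤ (q : ℤ) - 1 →
      Summable fun j : ℤ => Real.exp (-β * U |a + q * j|)) ∧
    Filter.Tendsto
      (fun β : ℝ =>
        (Finset.range q).sup' (Finset.nonempty_range_iff.mpr (by omega))
          (fun a : ℕ =>
            |Real.log (∑' j : ℤ, Real.exp (-β * U |(a : ℤ) + q * j|))
              - Real.log (∑' j : ℤ, Real.exp (-β * U |(q : ℤ) * j|))|))
      (nhdsWithin 0 (Set.Ioi 0)) (nhds 0) := by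
  refine ⟨fun β hβ a ha0 ha1 => summable_residueSum hα hK hUlim hβ ha0 (by omega), ?_⟩
  have hZ (a : ℕ) (ha : a < q) := tendsto_rpow_mul_residueSum hα hK hUlim (Int.natCast_nonneg a)
    (by exact_mod_cast ha)
  have hw : ∀ᶠ β in 𝓝[>] (0 : ℝ), β ^ (1 / α) ≠ 0 := by
    filter_upwards [self_mem_nhdsWithin] with β hβ using (rpow_pos_of_pos hβ _).ne'
  have hlog (a : ℕ) (ha : a ∈ Finset.range q) := (tendsto_log_sub_log_of_tendsto_mul
    (by positivity) hw (hZ a (Finset.mem_range.1 ha)) (hZ 0 (by omega))).abs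
  simpa [residueSum, Finset.sup'_const] using
    Tendsto.finset_sup'_nhds_apply (Finset.nonempty_range_iff.mpr (by omega)) hlog
end

section
/- For every β > 0, every integer q ≥ 1 and every integer i with 0 ≤ i ≤ q−1: ∑_{j∈ℤ} exp(−β·|i + q·j|) = cosh(β·(i − q/2)) / sinh(β·q/2). -/
theorem stmt13 (β : ℝ) (hβ : 0 < β) (q : ℕ) (hq : 1 ≤ q)
    (i : ℤ) (hi0 : 0 ≤ i) (hiq : i ≤ (q : ℤ) - 1) :
    ∑' j : ℤ, Real.exp (-β * |((i : ℝ) + q * j)|)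
      = Real.cosh (β * ((i : ℝ) - q / 2)) / Real.sinh (β * q / 2) := by
  have hq0 : (0 : ℝ) < q := by exact_mod_cast hq
  have hi0' : (0 : ℝ) ≤ i := by exact_mod_cast hi0
  have hiq' : (i : ℝ) ≤ (q : ℝ) - 1 := by exact_mod_cast hiq
  set r : ℝ := Real.exp (-(β * q)) with hr
  have hr0 : 0 < r := Real.exp_pos _
  have hr1 : r < 1 := Real.exp_lt_one_iff.mpr (by nlinarith)
  set f : ℤ → ℝ := fun j => Real.exp (-β * |((i : ℝ) + q * j)|) with hf
  have h_pos : ∀ n : ℕ, f n = Real.exp (-(β * i)) * r ^ n := by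
    intro n
    have habs : |((i : ℝ) + q * (n : ℤ))| = (i : ℝ) + q * n := by
      push_cast
      rw [abs_of_nonneg]
      positivity
    have : -β * ((i : ℝ) + q * n) = -(β * i) + (n : ℝ) * (-(β * q)) := by ring
    simp only [hf, habs]
    rw [this, Real.exp_add, Real.exp_nat_mul, hr]
  have h_neg : ∀ n : ℕ, f (-(n + 1)) = Real.exp (β * i - β * q) * r ^ n := by
    intro n
    have habs : |((i : ℝ) + q * ((-(n + 1) : ℤ) : ℝ))| = q * (n + 1) - i := by
      push_cast
      rw [abs_of_nonpos]
      · ring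
      · nlinarith [Nat.cast_nonneg (α := ℝ) n]
    have : -β * ((q : ℝ) * (n + 1) - i) = (β * i - β * q) + (n : ℝ) * (-(β * q)) := by ring
    simp only [hf]
    push_cast at habs ⊢
    rw [habs, this, Real.exp_add, Real.exp_nat_mul, hr]
  have hs1 : Summable fun n : ℕ => f n := by
    simp only [h_pos]
    exact (summable_geometric_of_lt_one hr0.le hr1).mul_left _
  have hs2 : Summable fun n : ℕ => f (-(n + 1)) := by
    simp only [h_neg]
    exact (summable_geometric_of_lt_one hr0.le hr1).mul_left _
  rw [show (∑' j : ℤ, Real.exp (-β * |((i : ℝ) + q * j)|)) = ∑' j : ℤ, f j from rfl,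
    tsum_of_nat_of_neg_add_one hs1 hs2]
  simp only [h_pos, h_neg]
  rw [tsum_mul_left, tsum_mul_left, tsum_geometric_of_lt_one hr0.le hr1]
  -- now algebra
  rw [Real.cosh_eq, Real.sinh_eq]
  set t : ℝ := Real.exp (β * q / 2) with ht
  have ht1 : 1 < t := by
    rw [ht, ← Real.exp_zero]
    exact Real.exp_lt_exp.mpr (by positivity)
  have ht0 : 0 < t := by positivity
  set s : ℝ := Real.exp (β * i) with hs
  have hs0 : 0 < s := Real.exp_pos _
  have e1 : Real.exp (-(β * i)) = s⁻¹ := by rw [Real.exp_neg, hs]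
  have e2 : Real.exp (β * q) = t * t := by rw [ht, ← Real.exp_add]; ring_nf
  have e3 : r = (t * t)⁻¹ := by rw [hr, Real.exp_neg, e2]
  have e4 : Real.exp (β * i - β * q) = s / (t * t) := by
    rw [Real.exp_sub, e2, hs]
  have e5 : Real.exp (β * ((i : ℝ) - q / 2)) = s / t := by
    rw [show β * ((i : ℝ) - q / 2) = β * i - β * q / 2 by ring, Real.exp_sub, hs, ht]
  have e6 : Real.exp (-(β * ((i : ℝ) - q / 2))) = t / s := by
    rw [Real.exp_neg, e5, inv_div]
  have e7 : Real.exp (-(β * q / 2)) = t⁻¹ := by rw [Real.exp_neg, ht]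
  rw [e1, e3, e4, e5, e6, e7]
  have h1 : 1 - (t * t)⁻¹ ≠ 0 := by
    have : (t * t)⁻¹ < 1 := by
      rw [inv_lt_one_iff₀]; right; nlinarith
    linarith
  have h2 : t - t⁻¹ ≠ 0 := by
    have : t⁻¹ < 1 := by rw [inv_lt_one_iff₀]; right; exact ht1
    intro h; nlinarith
  have h3 : t * t - 1 ≠ 0 := by nlinarith
  have h4 : t ^ 2 - 1 ≠ 0 := by nlinarith
  field_simp
  ring
end

section
/- Let d ≥ 2 be an integer, β > 0 and k ∈ ℝ. Then d·Q̂_{SOS,β}(k) > Q̂_{SOS,β}(0) holds if and only if cos k > d − (d−1)·cosh β, where Q̂_{SOS,β}(k) = ∑_{n∈ℤ} exp(−β|n|)·cos(n·k). -/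
/-!
Summing the two geometric series `∑ₙ (e^{-β} e^{±ik})ⁿ` identifies `Q̂_{SOS,β}(k)` with the Poisson
kernel `sinh β / (cosh β - cos k)`. Both denominators `cosh β - cos k` and `cosh β - 1` are positive,
so clearing them turns `d Q̂(k) > Q̂(0)` into the linear inequality `d (cosh β - 1) > cosh β - cos k`.
-/

/-- Fourier transform of the SOS transfer operator at inverse temperature `β`. -/
noncomputable def sosFourier (β k : ℝ) : ℝ :=
  ∑' n : ℤ, Real.exp (-β * |(n : ℝ)|) * Real.cos (n * k)

open Real

theorem Real.one_sub_two_mul_mul_cos_add_sq_pos {r : ℝ} (hr : |r| < 1) (k : ℝ) :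
    0 < 1 - 2 * r * cos k + r ^ 2 := by
  have h : r * cos k ≤ |r| :=
    calc r * cos k ≤ |r| * |cos k| := (le_abs_self _).trans (abs_mul _ _).le
      _ ≤ |r| := mul_le_of_le_one_right (abs_nonneg r) (abs_cos_le_one k)
  nlinarith [sq_abs r]

theorem Real.hasSum_pow_mul_cos {r : ℝ} (hr : |r| < 1) (k : ℝ) :
    HasSum (fun n : ℕ => r ^ n * cos (n * k))
      ((1 - r * cos k) / (1 - 2 * r * cos k + r ^ 2)) := by
  set z : ℂ := r * Complex.exp (k * Complex.I)
  have hz : ‖z‖ < 1 := by simpa [z, Complex.norm_exp_ofReal_mul_I] using hr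
  have hre : ∀ n : ℕ, (z ^ n).re = r ^ n * cos (n * k) := fun n => by
    rw [mul_pow, ← Complex.exp_nat_mul, ← Complex.ofReal_pow,
      show (n : ℂ) * (k * Complex.I) = ((n * k : ℝ) : ℂ) * Complex.I by push_cast; ring,
      Complex.re_ofReal_mul, Complex.exp_ofReal_mul_I_re]
  have hzre : z.re = r * cos k := by simp [z, Complex.exp_ofReal_mul_I_re]
  have hzim : z.im = r * sin k := by simp [z, Complex.exp_ofReal_mul_I_im]
  have hnormSq : Complex.normSq (1 - z) = 1 - 2 * r * cos k + r ^ 2 := by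
    rw [Complex.normSq_apply]
    simp only [Complex.sub_re, Complex.sub_im, Complex.one_re, Complex.one_im, hzre, hzim]
    linear_combination r ^ 2 * sin_sq_add_cos_sq k
  have := Complex.hasSum_re (hasSum_geometric_of_norm_lt_one hz)
  simpa only [hre, Complex.inv_re, hnormSq, Complex.sub_re, Complex.one_re, hzre] using this

theorem Real.hasSum_pow_natAbs_mul_cos {r : ℝ} (hr : |r| < 1) (k : ℝ) :
    HasSum (fun n : ℤ => r ^ n.natAbs * cos (n * k))
      ((1 - r ^ 2) / (1 - 2 * r * cos k + r ^ 2)) := by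
  set P := (1 - r * cos k) / (1 - 2 * r * cos k + r ^ 2)
  have hpos : HasSum (fun n : ℕ => r ^ (n : ℤ).natAbs * cos ((n : ℤ) * k)) P := by
    simpa only [Int.natAbs_natCast, Int.cast_natCast] using hasSum_pow_mul_cos hr k
  have hneg : HasSum (fun n : ℕ => r ^ (-n : ℤ).natAbs * cos (((-n : ℤ) : ℝ) * k)) P := by
    simpa only [Int.natAbs_neg, Int.cast_neg, neg_mul, cos_neg] using hpos
  have hden := (one_sub_two_mul_mul_cos_add_sq_pos hr k).ne'
  have hval : P + P - r ^ (0 : ℤ).natAbs * cos (((0 : ℤ) : ℝ) * k)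
      = (1 - r ^ 2) / (1 - 2 * r * cos k + r ^ 2) := by
    simp only [P, Int.natAbs_zero, pow_zero, Int.cast_zero, zero_mul, cos_zero, mul_one]
    rw [← add_div, div_sub_one hden]
    ring
  exact hval ▸ hpos.of_nat_of_neg hneg

theorem sosFourier_eq_sinh_div {β : ℝ} (hβ : 0 < β) (k : ℝ) :
    sosFourier β k = sinh β / (cosh β - cos k) := by
  have hr : |exp (-β)| < 1 := by
    rw [abs_of_pos (exp_pos _), exp_lt_one_iff]; linarith
  have hterm : ∀ n : ℤ, exp (-β * |(n : ℝ)|) = exp (-β) ^ n.natAbs := fun n => by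
    rw [← exp_nat_mul, Nat.cast_natAbs, Int.cast_abs, mul_comm]
  have hden : 0 < cosh β - cos k := by
    linarith [one_lt_cosh.mpr hβ.ne', cos_le_one k]
  simp only [sosFourier, hterm, (hasSum_pow_natAbs_mul_cos hr k).tsum_eq]
  rw [sinh_eq, cosh_eq, div_eq_div_iff (one_sub_two_mul_mul_cos_add_sq_pos hr k).ne'
    (by rw [← cosh_eq]; exact hden.ne'), exp_neg]
  field_simp
  ring

theorem stmt16_general (d : ℕ) (β : ℝ) (hβ : 0 < β) (k : ℝ) :
    (d : ℝ) * sosFourier β k > sosFourier β 0 ↔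
      Real.cos k > (d : ℝ) - ((d : ℝ) - 1) * Real.cosh β := by
  have hsinh : 0 < sinh β := sinh_pos_iff.mpr hβ
  have hcosh : 1 < cosh β := one_lt_cosh.mpr hβ.ne'
  have hden : 0 < cosh β - cos k := by linarith [cos_le_one k]
  rw [sosFourier_eq_sinh_div hβ, sosFourier_eq_sinh_div hβ, cos_zero, gt_iff_lt, gt_iff_lt,
    mul_div_assoc', div_lt_div_iff₀ (by linarith) hden, mul_comm (d : ℝ), mul_assoc,
    mul_lt_mul_iff_right₀ hsinh]
  constructor <;> intro h <;> linarith

theorem stmt16 (d : ℕ) (hd : 2 ≤ d) (β : ℝ) (hβ : 0 < β) (k : ℝ) :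
    (d : ℝ) * sosFourier β k > sosFourier β 0 ↔
      Real.cos k > (d : ℝ) - ((d : ℝ) - 1) * Real.cosh β :=
  stmt16_general d β hβ k
end

section
/- Let Q̂_{ISq,a}(k) = ∑_{n∈ℤ} Q_{ISq,a}(n)·cos(n·k) with Q_{ISq,a}(0) = 1 and Q_{ISq,a}(n) = a/n² for n ≠ 0, a > 0. Then: (i) if d ≥ 2 is an integer and 0 < a < (6/π²)·(d−1)/(d+2), then d·Q̂_{ISq,a}(k) > Q̂_{ISq,a}(0) for all k ∈ [0, π]; and (ii) if d ≥ 3 is an integer and a > (6/π²)·(d+1)/(d−2), then d·Q̂_{ISq,a}(π) < −Q̂_{ISq,a}(0). -/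
/-- Fourier transform of the inverse square transfer operator with parameter `a`:
`Q(0) = 1`, `Q(n) = a/n²` for `n ≠ 0`. -/
noncomputable def isqFourier (a k : ℝ) : ℝ :=
  1 + ∑' n : {n : ℤ // n ≠ 0}, a / ((n : ℤ) : ℝ) ^ 2 * Real.cos ((n : ℤ) * k)

/-!
On `[0, 2π]` the Fourier series of the Bernoulli polynomial `B₂` gives
`∑_{n ≠ 0} cos (n k) / n² = 2π² B₂(k / 2π) = (k - π)² / 2 - π² / 6`.
Hence `Q̂` is a parabola with vertex at `k = π`, so on `[0, π]` it is smallest at `π`, and both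
claims become linear inequalities in `a` between `Q̂(0) = 1 + a π² / 3` and `Q̂(π) = 1 - a π² / 6`.
-/

open Real

lemma hasSum_cos_nat_mul_div_sq {k : ℝ} (hk : k ∈ Set.Icc 0 (2 * π)) :
    HasSum (fun n : ℕ => cos (n * k) / (n : ℝ) ^ 2) (k ^ 2 / 4 - π * k / 2 + π ^ 2 / 6) := by
  have hx : k / (2 * π) ∈ Set.Icc (0 : ℝ) 1 :=
    ⟨div_nonneg hk.1 (by positivity), (div_le_one (by positivity)).2 hk.2⟩
  convert hasSum_one_div_nat_pow_mul_cos one_ne_zero hx using 1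
  · ext n
    have harg : 2 * π * n * (k / (2 * π)) = n * k := by field_simp
    rw [harg]
    ring
  · change _ = _ * bernoulliFun 2 _
    rw [bernoulliFun_two]
    field_simp
    norm_num [Nat.factorial]
    ring

lemma hasSum_cos_int_mul_div_sq {k : ℝ} (hk : k ∈ Set.Icc 0 (2 * π)) :
    HasSum (fun n : {n : ℤ // n ≠ 0} => cos ((n : ℤ) * k) / ((n : ℤ) : ℝ) ^ 2)
      ((k - π) ^ 2 / 2 - π ^ 2 / 6) := by
  set f : ℤ → ℝ := fun n => cos (n * k) / (n : ℝ) ^ 2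
  have hnat : HasSum (fun n : ℕ => f n) (k ^ 2 / 4 - π * k / 2 + π ^ 2 / 6) := by
    simpa [f] using hasSum_cos_nat_mul_div_sq hk
  have hneg : HasSum (fun n : ℕ => f (-n)) (k ^ 2 / 4 - π * k / 2 + π ^ 2 / 6) := by
    simpa [f, neg_mul, cos_neg] using hnat
  -- `f 0 = cos 0 / 0 = 0` in Lean, so dropping `n = 0` changes nothing.
  have hsupp : Function.support f ⊆ {n : ℤ | n ≠ 0} := by
    rintro n hn rfl
    simp [f] at hn
  have hvalue : (k - π) ^ 2 / 2 - π ^ 2 / 6 =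
      k ^ 2 / 4 - π * k / 2 + π ^ 2 / 6 + (k ^ 2 / 4 - π * k / 2 + π ^ 2 / 6) - f 0 := by
    simp only [f, Int.cast_zero]
    ring
  rw [hvalue]
  exact (hasSum_subtype_iff_of_support_subset hsupp).2 (hnat.of_nat_of_neg hneg)

lemma isqFourier_eq {a k : ℝ} (hk : k ∈ Set.Icc 0 (2 * π)) :
    isqFourier a k = 1 + a * ((k - π) ^ 2 / 2 - π ^ 2 / 6) := by
  have h := (hasSum_cos_int_mul_div_sq hk).mul_left a
  rw [isqFourier, ← h.tsum_eq]
  congr 1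
  exact tsum_congr fun n => by ring

lemma isqFourier_zero (a : ℝ) : isqFourier a 0 = 1 + a * π ^ 2 / 3 := by
  rw [isqFourier_eq ⟨le_rfl, by positivity⟩]
  ring

lemma isqFourier_pi (a : ℝ) : isqFourier a π = 1 - a * π ^ 2 / 6 := by
  rw [isqFourier_eq ⟨pi_pos.le, by linarith [pi_pos]⟩]
  ring

lemma isqFourier_pi_le {a k : ℝ} (ha : 0 ≤ a) (hk : k ∈ Set.Icc 0 (2 * π)) :
    isqFourier a π ≤ isqFourier a k := by
  rw [isqFourier_eq hk, isqFourier_pi]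
  linarith [mul_nonneg ha (sq_nonneg (k - π))]

theorem stmt18 :
    (∀ d : ℕ, 2 ≤ d → ∀ a : ℝ, 0 < a →
      a < 6 / Real.pi ^ 2 * (((d : ℝ) - 1) / ((d : ℝ) + 2)) →
      ∀ k ∈ Set.Icc (0 : ℝ) Real.pi, (d : ℝ) * isqFourier a k > isqFourier a 0) ∧
    (∀ d : ℕ, 3 ≤ d → ∀ a : ℝ, 0 < a →
      a > 6 / Real.pi ^ 2 * (((d : ℝ) + 1) / ((d : ℝ) - 2)) →
      (d : ℝ) * isqFourier a Real.pi < -isqFourier a 0) := by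
  constructor
  · intro d hd a ha ha_lt k hk
    have hd : (2 : ℝ) ≤ d := by exact_mod_cast hd
    rw [div_mul_div_comm, lt_div_iff₀ (by positivity)] at ha_lt
    have hk' : k ∈ Set.Icc 0 (2 * π) := ⟨hk.1, by linarith [hk.2, pi_pos]⟩
    calc isqFourier a 0 = 1 + a * π ^ 2 / 3 := isqFourier_zero a
      _ < d * (1 - a * π ^ 2 / 6) := by linarith
      _ = d * isqFourier a π := by rw [isqFourier_pi]
      _ ≤ d * isqFourier a k := by gcongr; exact isqFourier_pi_le ha.le hk'
  · intro d hd a _ ha_gt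
    have hd : (3 : ℝ) ≤ d := by exact_mod_cast hd
    rw [gt_iff_lt, div_mul_div_comm, div_lt_iff₀ (mul_pos (by positivity) (by linarith))] at ha_gt
    rw [isqFourier_pi, isqFourier_zero]
    linarith
end
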